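/- arXiv:2104.03858 — 6 statements merged into one kernel-verified Lean document; each statement's English description precedes it below -/
import Mathlib

section
/- Let H : ℝ^N → ℝ (N ≥ 2) be a Finsler–Minkowski norm. Then there exists a constant C ≥ 1 such that for every x, y ∈ ℝ^N, H((x+y)/2)² + (1/(4C²))·H(x−y)² ≤ (H(x)² + H(y)²)/2. -/
set_option maxHeartbeats 1000000


open scoped InnerProductSpace

noncomputable section

/-- A Finsler–Minkowski norm on `ℝ^N`: nonnegative, vanishing only at the origin,
absolutely homogeneous of degree one, `C^∞` away from the origin, and such that the
Hessian of `H²/2` is positive definite on `ℝ^N \\ {0}`. -/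
def IsFinslerMinkowskiNorm {N : ℕ} (H : EuclideanSpace ℝ (Fin N) → ℝ) : Prop :=
  (∀ x, 0 ≤ H x) ∧
  (∀ x, H x = 0 ↔ x = 0) ∧
  (∀ (t : ℝ) (x : EuclideanSpace ℝ (Fin N)), H (t • x) = |t| * H x) ∧
  ContDiffOn ℝ (⊤ : ℕ∞) H {(0 : EuclideanSpace ℝ (Fin N))}ᶜ ∧
  (∀ x : EuclideanSpace ℝ (Fin N), x ≠ 0 →
    ∀ v : EuclideanSpace ℝ (Fin N), v ≠ 0 →
      0 < fderiv ℝ (fderiv ℝ (fun z => H z ^ 2 / 2)) x v v)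

namespace FinslerAux

variable {N : ℕ} {H : EuclideanSpace ℝ (Fin N) → ℝ}

local notation "E" => EuclideanSpace ℝ (Fin N)

theorem fhom (hhom : ∀ (t : ℝ) (x : E), H (t • x) = |t| * H x) (t : ℝ) (x : E) :
    H (t • x) ^ 2 / 2 = t ^ 2 * (H x ^ 2 / 2) := by
  rw [hhom t x, mul_pow, sq_abs]; ring

theorem fcd (hcd : ContDiffOn ℝ (⊤ : ℕ∞) H {(0 : E)}ᶜ) :
    ContDiffOn ℝ (⊤ : ℕ∞) (fun z => H z ^ 2 / 2) {(0 : E)}ᶜ :=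
  (hcd.pow 2).div_const 2

theorem Fcd (hcd : ContDiffOn ℝ (⊤ : ℕ∞) H {(0 : E)}ᶜ) :
    ContDiffOn ℝ (⊤ : ℕ∞) (fderiv ℝ (fun z => H z ^ 2 / 2)) {(0 : E)}ᶜ :=
  (fcd hcd).fderiv_of_isOpen (m := (⊤ : ℕ∞)) isOpen_compl_singleton (le_of_eq rfl)

theorem fdiffAt (hcd : ContDiffOn ℝ (⊤ : ℕ∞) H {(0 : E)}ᶜ) {z : E} (hz : z ≠ 0) :
    DifferentiableAt ℝ (fun z => H z ^ 2 / 2) z :=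
  ((fcd hcd).differentiableOn (by norm_num)).differentiableAt
    (isOpen_compl_singleton.mem_nhds hz)

theorem FdiffAt (hcd : ContDiffOn ℝ (⊤ : ℕ∞) H {(0 : E)}ᶜ) {z : E} (hz : z ≠ 0) :
    DifferentiableAt ℝ (fderiv ℝ (fun z => H z ^ 2 / 2)) z :=
  ((Fcd hcd).differentiableOn (by norm_num)).differentiableAt
    (isOpen_compl_singleton.mem_nhds hz)

theorem Gcont (hcd : ContDiffOn ℝ (⊤ : ℕ∞) H {(0 : E)}ᶜ) :
    ContinuousOn (fderiv ℝ (fderiv ℝ (fun z => H z ^ 2 / 2))) {(0 : E)}ᶜ :=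
  (Fcd hcd).continuousOn_fderiv_of_isOpen isOpen_compl_singleton (by exact_mod_cast le_top)

end FinslerAux

namespace FinslerAux
variable {N : ℕ} {H : EuclideanSpace ℝ (Fin N) → ℝ}
local notation "E" => EuclideanSpace ℝ (Fin N)

theorem Fhom (hhom : ∀ (t : ℝ) (x : E), H (t • x) = |t| * H x)
    (hcd : ContDiffOn ℝ (⊤ : ℕ∞) H {(0 : E)}ᶜ)
    {t : ℝ} (ht : t ≠ 0) {x : E} (hx : x ≠ 0) :
    fderiv ℝ (fun z => H z ^ 2 / 2) (t • x) = t • fderiv ℝ (fun z => H z ^ 2 / 2) x := by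
  set f : E → ℝ := fun z => H z ^ 2 / 2 with hf
  have h1 : HasFDerivAt f (fderiv ℝ f (t • x)) (t • x) :=
    (fdiffAt hcd (smul_ne_zero ht hx)).hasFDerivAt
  have h2 : HasFDerivAt (fun z : E => f (t • z))
      ((fderiv ℝ f (t • x)).comp (t • ContinuousLinearMap.id ℝ E)) x :=
    h1.comp x ((hasFDerivAt_id x).const_smul t)
  have h3 : (fun z : E => f (t • z)) = fun z => t ^ 2 • f z := by
    funext z
    simpa [smul_eq_mul] using fhom hhom t z
  rw [h3] at h2
  have h4 : HasFDerivAt (fun z : E => t ^ 2 • f z) (t ^ 2 • fderiv ℝ f x) x :=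
    (fdiffAt hcd hx).hasFDerivAt.const_smul (t ^ 2)
  have heq := h2.unique h4
  ext w
  have := congrArg (fun L : E →L[ℝ] ℝ => L w) heq
  simp only [ContinuousLinearMap.coe_comp', Function.comp_apply,
    ContinuousLinearMap.smul_apply, ContinuousLinearMap.coe_smul',
    Pi.smul_apply, ContinuousLinearMap.coe_id', id_eq] at this ⊢
  have hmap : fderiv ℝ f (t • x) (t • w) = t * fderiv ℝ f (t • x) w := by
    rw [map_smul]; rfl
  rw [hmap, smul_eq_mul] at this
  rw [smul_eq_mul]
  exact mul_left_cancel₀ ht (by rw [this]; ring)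

theorem Ghom (hhom : ∀ (t : ℝ) (x : E), H (t • x) = |t| * H x)
    (hcd : ContDiffOn ℝ (⊤ : ℕ∞) H {(0 : E)}ᶜ)
    {t : ℝ} (ht : t ≠ 0) {x : E} (hx : x ≠ 0) (v : E) :
    fderiv ℝ (fderiv ℝ (fun z => H z ^ 2 / 2)) (t • x) v
      = fderiv ℝ (fderiv ℝ (fun z => H z ^ 2 / 2)) x v := by
  set f : E → ℝ := fun z => H z ^ 2 / 2 with hf
  set F := fderiv ℝ f with hF
  have h1 : HasFDerivAt F (fderiv ℝ F (t • x)) (t • x) :=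
    (FdiffAt hcd (smul_ne_zero ht hx)).hasFDerivAt
  have h2 : HasFDerivAt (fun z : E => F (t • z))
      ((fderiv ℝ F (t • x)).comp (t • ContinuousLinearMap.id ℝ E)) x :=
    h1.comp x ((hasFDerivAt_id x).const_smul t)
  have hev : (fun z : E => t • F z) =ᶠ[nhds x] fun z : E => F (t • z) := by
    filter_upwards [isOpen_compl_singleton.mem_nhds hx] with z hz
    exact (Fhom hhom hcd ht hz).symm
  have h2' : HasFDerivAt (fun z : E => t • F z)
      ((fderiv ℝ F (t • x)).comp (t • ContinuousLinearMap.id ℝ E)) x :=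
    h2.congr_of_eventuallyEq hev
  have h4 : HasFDerivAt (fun z : E => t • F z) (t • fderiv ℝ F x) x :=
    (FdiffAt hcd hx).hasFDerivAt.const_smul t
  have heq := h2'.unique h4
  have := congrArg (fun L : E →L[ℝ] (E →L[ℝ] ℝ) => L v) heq
  simp only [ContinuousLinearMap.coe_comp', Function.comp_apply,
    ContinuousLinearMap.smul_apply, ContinuousLinearMap.coe_smul',
    Pi.smul_apply, ContinuousLinearMap.coe_id', id_eq] at this
  have hmap : fderiv ℝ F (t • x) (t • v) = t • fderiv ℝ F (t • x) v := map_smul _ t v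
  rw [hmap] at this
  exact smul_right_injective _ ht this

end FinslerAux

namespace FinslerAux
variable {N : ℕ} {H : EuclideanSpace ℝ (Fin N) → ℝ}
local notation "E" => EuclideanSpace ℝ (Fin N)

theorem H_zero (hhom : ∀ (t : ℝ) (x : E), H (t • x) = |t| * H x) : H 0 = 0 := by
  have := hhom 0 0
  simpa using this

theorem nontrivE (hN : 2 ≤ N) : Nontrivial (EuclideanSpace ℝ (Fin N)) := by
  have h : 0 < Module.finrank ℝ (EuclideanSpace ℝ (Fin N)) := by
    rw [finrank_euclideanSpace_fin]; omega
  exact Module.nontrivial_of_finrank_pos h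

theorem exists_M (hN : 2 ≤ N) (h0 : ∀ x, 0 ≤ H x)
    (hhom : ∀ (t : ℝ) (x : E), H (t • x) = |t| * H x)
    (hcd : ContDiffOn ℝ (⊤ : ℕ∞) H {(0 : E)}ᶜ) :
    ∃ M > (0 : ℝ), ∀ z : E, H z ≤ M * ‖z‖ := by
  have := nontrivE (N := N) hN
  have hne : (Metric.sphere (0 : E) 1).Nonempty := NormedSpace.sphere_nonempty.2 zero_le_one
  have hsub : Metric.sphere (0 : E) 1 ⊆ {(0 : E)}ᶜ := by
    intro z hz
    simp only [Set.mem_compl_iff, Set.mem_singleton_iff]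
    intro h
    rw [h] at hz
    simp at hz
  obtain ⟨z0, hz0, hmax⟩ := (isCompact_sphere (0 : E) 1).exists_isMaxOn hne
    ((hcd.continuousOn).mono hsub)
  refine ⟨max (H z0) 1, lt_max_of_lt_right one_pos, fun z => ?_⟩
  rcases eq_or_ne z 0 with rfl | hz
  · simp [H_zero hhom]
  · have hnz : ‖z‖ ≠ 0 := norm_ne_zero_iff.2 hz
    have hu : (‖z‖⁻¹ • z) ∈ Metric.sphere (0 : E) 1 := by
      simp [norm_smul, abs_of_nonneg (norm_nonneg z), inv_mul_cancel₀ hnz]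
    have h1 : H (‖z‖⁻¹ • z) = ‖z‖⁻¹ * H z := by
      rw [hhom, abs_of_nonneg (by positivity)]
    have h2 : ‖z‖⁻¹ * H z ≤ max (H z0) 1 := by
      rw [← h1]
      exact le_trans (hmax hu) (le_max_left _ _)
    calc H z = ‖z‖ * (‖z‖⁻¹ * H z) := by field_simp
      _ ≤ ‖z‖ * max (H z0) 1 := by
          apply mul_le_mul_of_nonneg_left h2 (norm_nonneg z)
      _ = max (H z0) 1 * ‖z‖ := mul_comm _ _

theorem H_cont (hN : 2 ≤ N) (h0 : ∀ x, 0 ≤ H x)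
    (hhom : ∀ (t : ℝ) (x : E), H (t • x) = |t| * H x)
    (hcd : ContDiffOn ℝ (⊤ : ℕ∞) H {(0 : E)}ᶜ) : Continuous H := by
  obtain ⟨M, hM, hMle⟩ := exists_M hN h0 hhom hcd
  rw [continuous_iff_continuousAt]
  intro z
  rcases eq_or_ne z 0 with rfl | hz
  · have : Filter.Tendsto H (nhds 0) (nhds 0) := by
      apply squeeze_zero h0 hMle
      have : Filter.Tendsto (fun z : E => M * ‖z‖) (nhds 0) (nhds (M * ‖(0 : E)‖)) :=
        (continuous_const.mul continuous_norm).tendsto 0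
      simpa using this
    rw [ContinuousAt, H_zero hhom]
    exact this
  · exact (hcd.continuousOn.continuousAt (isOpen_compl_singleton.mem_nhds hz))

theorem exists_m (hN : 2 ≤ N)
    (hhom : ∀ (t : ℝ) (x : E), H (t • x) = |t| * H x)
    (hcd : ContDiffOn ℝ (⊤ : ℕ∞) H {(0 : E)}ᶜ)
    (hpos : ∀ x : E, x ≠ 0 → ∀ v : E, v ≠ 0 →
      0 < fderiv ℝ (fderiv ℝ (fun z => H z ^ 2 / 2)) x v v) :
    ∃ m > (0 : ℝ), ∀ z : E, z ≠ 0 → ∀ v : E,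
      m * ‖v‖ ^ 2 ≤ fderiv ℝ (fderiv ℝ (fun z => H z ^ 2 / 2)) z v v := by
  have := nontrivE (N := N) hN
  set G := fderiv ℝ (fderiv ℝ (fun z => H z ^ 2 / 2)) with hG
  have hne : (Metric.sphere (0 : E) 1).Nonempty := NormedSpace.sphere_nonempty.2 zero_le_one
  have hsmem : ∀ z ∈ Metric.sphere (0 : E) 1, z ≠ 0 := by
    intro z hz h
    rw [h] at hz
    simp at hz
  set K := (Metric.sphere (0 : E) 1) ×ˢ (Metric.sphere (0 : E) 1) with hK
  have hKc : IsCompact K := (isCompact_sphere 0 1).prod (isCompact_sphere 0 1)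
  have hKne : K.Nonempty := hne.prod hne
  have hcont : ContinuousOn (fun p : E × E => G p.1 p.2 p.2) K := by
    have h1 : ContinuousOn (fun p : E × E => G p.1) K := by
      apply (Gcont hcd).comp continuous_fst.continuousOn
      intro p hp
      exact hsmem p.1 hp.1
    exact (h1.clm_apply continuous_snd.continuousOn).clm_apply continuous_snd.continuousOn
  obtain ⟨p0, hp0, hmin⟩ := hKc.exists_isMinOn hKne hcont
  refine ⟨G p0.1 p0.2 p0.2, hpos p0.1 (hsmem _ hp0.1) p0.2 (hsmem _ hp0.2), ?_⟩
  intro z hz v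
  rcases eq_or_ne v 0 with rfl | hv
  · simp
  · set m := G p0.1 p0.2 p0.2
    have hnz : ‖z‖ ≠ 0 := norm_ne_zero_iff.2 hz
    have hnv : ‖v‖ ≠ 0 := norm_ne_zero_iff.2 hv
    set u := ‖z‖⁻¹ • z with hu
    set w := ‖v‖⁻¹ • v with hw
    have hus : u ∈ Metric.sphere (0 : E) 1 := by
      simp [hu, norm_smul, abs_of_nonneg (norm_nonneg z), inv_mul_cancel₀ hnz]
    have hws : w ∈ Metric.sphere (0 : E) 1 := by
      simp [hw, norm_smul, abs_of_nonneg (norm_nonneg v), inv_mul_cancel₀ hnv]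
    have hzu : z = ‖z‖ • u := by rw [hu, smul_inv_smul₀ hnz]
    have e1 : G z v = G u v := by
      rw [hzu]
      exact Ghom hhom hcd hnz (hsmem u hus) v
    have hvw : v = ‖v‖ • w := by rw [hw, smul_inv_smul₀ hnv]
    have e2 : G u v v = ‖v‖ ^ 2 * G u w w := by
      conv_lhs => rw [hvw]
      rw [map_smul]
      simp only [ContinuousLinearMap.smul_apply, map_smul, smul_eq_mul]
      ring
    have e3 : m ≤ G u w w := hmin (Set.mk_mem_prod hus hws)
    rw [e1, e2]
    have : 0 < ‖v‖ ^ 2 := by positivity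
    calc m * ‖v‖ ^ 2 ≤ G u w w * ‖v‖ ^ 2 := by
          apply mul_le_mul_of_nonneg_right e3 (le_of_lt this)
      _ = ‖v‖ ^ 2 * G u w w := mul_comm _ _

end FinslerAux







namespace FinslerAux
variable {N : ℕ} {H : EuclideanSpace ℝ (Fin N) → ℝ}
local notation "E" => EuclideanSpace ℝ (Fin N)

theorem fcd' (hcd : ContDiffOn ℝ (⊤ : ℕ∞) H {(0 : E)}ᶜ) :
    ContDiffOn ℝ (⊤ : ℕ∞) (fun z => H z ^ 2 / 2) {(0 : E)}ᶜ :=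
  (hcd.pow 2).div_const 2

theorem fdiffAt' (hcd : ContDiffOn ℝ (⊤ : ℕ∞) H {(0 : E)}ᶜ) {z : E} (hz : z ≠ 0) :
    DifferentiableAt ℝ (fun z => H z ^ 2 / 2) z :=
  ((fcd' hcd).differentiableOn (by norm_num)).differentiableAt
    (isOpen_compl_singleton.mem_nhds hz)

theorem FdiffAt' (hcd : ContDiffOn ℝ (⊤ : ℕ∞) H {(0 : E)}ᶜ) {z : E} (hz : z ≠ 0) :
    DifferentiableAt ℝ (fderiv ℝ (fun z => H z ^ 2 / 2)) z :=
  (((fcd' hcd).fderiv_of_isOpen (m := (⊤ : ℕ∞)) isOpen_compl_singleton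
      (le_of_eq rfl)).differentiableOn (by norm_num)).differentiableAt
    (isOpen_compl_singleton.mem_nhds hz)

theorem seg_key (hcd : ContDiffOn ℝ (⊤ : ℕ∞) H {(0 : E)}ᶜ) {m : ℝ}
    (hmle : ∀ z : E, z ≠ 0 → ∀ v : E,
      m * ‖v‖ ^ 2 ≤ fderiv ℝ (fderiv ℝ (fun z => H z ^ 2 / 2)) z v v)
    {x y : E} (hseg : ∀ t ∈ Set.Icc (0 : ℝ) 1, x + t • (y - x) ≠ 0) :
    H ((2 : ℝ)⁻¹ • (x + y)) ^ 2 / 2 + m / 8 * ‖x - y‖ ^ 2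
      ≤ (H x ^ 2 / 2 + H y ^ 2 / 2) / 2 := by
  set f : E → ℝ := fun z => H z ^ 2 / 2 with hf
  set F := fderiv ℝ f with hF
  set G := fderiv ℝ F with hG
  set v : E := y - x with hv
  set c : ℝ → E := fun t => x + t • v with hc
  have hccont : Continuous c := by
    apply continuous_const.add
    exact continuous_id.smul continuous_const
  set U : Set ℝ := c ⁻¹' {(0 : E)}ᶜ with hU
  have hUopen : IsOpen U := isOpen_compl_singleton.preimage hccont
  have hIccU : Set.Icc (0 : ℝ) 1 ⊆ U := fun t ht => hseg t ht
  have hcder : ∀ t : ℝ, HasDerivAt c v t := by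
    intro t
    have := ((hasDerivAt_id t).smul_const v).const_add x
    simpa [hc] using this
  set a : ℝ := ⟪x, v⟫_ℝ with ha
  set b : ℝ := ‖v‖ ^ 2 with hb
  set q : ℝ → ℝ := fun t => m / 2 * (‖x‖ ^ 2 + 2 * a * t + b * t ^ 2) with hq
  set ψ : ℝ → ℝ := fun t => f (c t) - q t with hψ
  have hqder : ∀ t : ℝ, HasDerivAt q (m / 2 * (2 * a + 2 * b * t)) t := by
    intro t
    have h1 : HasDerivAt (fun s : ℝ => ‖x‖ ^ 2 + 2 * a * s + b * s ^ 2)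
        (2 * a + 2 * b * t) t := by
      have i1 : HasDerivAt (fun s : ℝ => 2 * a * s) (2 * a) t := by
        simpa using (hasDerivAt_id t).const_mul (2 * a)
      have i2 : HasDerivAt (fun s : ℝ => b * s ^ 2) (2 * b * t) t := by
        have := (hasDerivAt_pow 2 t).const_mul b
        simpa [mul_comm, mul_assoc, mul_left_comm] using this
      exact ((i1.const_add (‖x‖ ^ 2)).add i2)
    simpa using h1.const_mul (m / 2)
  have hψder : ∀ t ∈ U, HasDerivAt ψ (F (c t) v - m / 2 * (2 * a + 2 * b * t)) t := by
    intro t ht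
    have h1 : HasDerivAt (fun s => f (c s)) (F (c t) v) t :=
      (fdiffAt' hcd ht).hasFDerivAt.comp_hasDerivAt t (hcder t)
    exact h1.sub (hqder t)
  set φ : ℝ → ℝ := fun t => F (c t) v - m / 2 * (2 * a + 2 * b * t) with hφ
  have hφder : ∀ t ∈ U, HasDerivAt φ (G (c t) v v - m * b) t := by
    intro t ht
    have h1 : HasDerivAt (fun s => F (c s)) (G (c t) v) t :=
      (FdiffAt' hcd ht).hasFDerivAt.comp_hasDerivAt t (hcder t)
    have h2 : HasDerivAt (fun s => F (c s) v) (G (c t) v v) t := by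
      have := h1.clm_apply (hasDerivAt_const t v)
      simpa using this
    have h3 : HasDerivAt (fun s : ℝ => m / 2 * (2 * a + 2 * b * s)) (m * b) t := by
      have i1 : HasDerivAt (fun s : ℝ => 2 * a + 2 * b * s) (2 * b) t := by
        simpa using ((hasDerivAt_id t).const_mul (2 * b)).const_add (2 * a)
      have := i1.const_mul (m / 2)
      exact this.congr_deriv (by ring)
    exact h2.sub h3
  have hψU : ∀ t ∈ U, deriv ψ t = φ t := fun t ht => (hψder t ht).deriv
  have hconv : ConvexOn ℝ (Set.Icc (0 : ℝ) 1) ψ := by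
    apply convexOn_of_deriv2_nonneg (convex_Icc 0 1)
    · -- continuity
      apply ContinuousOn.sub
      · apply ((fcd' hcd).continuousOn.comp hccont.continuousOn ?_)
        intro t ht
        exact hIccU ht
      · exact (continuous_const.mul (by fun_prop)).continuousOn
    · intro t ht
      rw [interior_Icc] at ht
      exact ((hψder t (hIccU (Set.Ioo_subset_Icc_self ht))).differentiableAt).differentiableWithinAt
    · intro t ht
      rw [interior_Icc] at ht
      have htU : t ∈ U := hIccU (Set.Ioo_subset_Icc_self ht)
      have hev : φ =ᶠ[nhds t] deriv ψ := by
        filter_upwards [hUopen.mem_nhds htU] with s hs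
        exact (hψU s hs).symm
      exact (((hφder t htU).differentiableAt).congr_of_eventuallyEq
        hev.symm).differentiableWithinAt
    · intro t ht
      rw [interior_Icc] at ht
      have htU : t ∈ U := hIccU (Set.Ioo_subset_Icc_self ht)
      have hev : deriv ψ =ᶠ[nhds t] φ := by
        filter_upwards [hUopen.mem_nhds htU] with s hs
        exact hψU s hs
      have h2 : deriv (deriv ψ) t = G (c t) v v - m * b := by
        rw [Filter.EventuallyEq.deriv_eq hev]
        exact (hφder t htU).deriv
      have : deriv^[2] ψ t = deriv (deriv ψ) t := by
        simp [Function.iterate_succ, Function.iterate_one]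
      rw [this, h2, sub_nonneg]
      rw [hb]
      have := hmle (c t) htU v
      linarith [this]
  -- midpoint inequality
  have hmid := hconv.2 (Set.left_mem_Icc.2 zero_le_one) (Set.right_mem_Icc.2 zero_le_one)
    (by norm_num : (0:ℝ) ≤ 1/2) (by norm_num : (0:ℝ) ≤ 1/2) (by norm_num)
  have hhalf : (1/2 : ℝ) • (0:ℝ) + (1/2 : ℝ) • (1:ℝ) = 1/2 := by norm_num
  rw [hhalf] at hmid
  have hc0 : c 0 = x := by simp [hc]
  have hc1 : c 1 = y := by simp [hc, hv]
  have hchalf : c (1/2) = (2 : ℝ)⁻¹ • (x + y) := by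
    rw [hc, hv]
    module
  have hbxy : b = ‖x - y‖ ^ 2 := by rw [hb, hv, norm_sub_rev]
  have hψ0 : ψ 0 = f x - m / 2 * ‖x‖ ^ 2 := by simp [hψ, hq, hc0]
  have hψ1 : ψ 1 = f y - m / 2 * (‖x‖ ^ 2 + 2 * a + b) := by simp [hψ, hq, hc1]
  have hψh : ψ (1/2) = f ((2 : ℝ)⁻¹ • (x + y)) - m / 2 * (‖x‖ ^ 2 + a + b / 4) := by
    simp only [hψ, hq, hchalf]
    ring_nf
  rw [hψ0, hψ1, hψh] at hmid
  rw [← hbxy]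
  simp only [hf] at hmid ⊢
  simp only [smul_eq_mul] at hmid
  linarith [hmid]
end FinslerAux







namespace FinslerAux
variable {N : ℕ} {H : EuclideanSpace ℝ (Fin N) → ℝ}
local notation "E" => EuclideanSpace ℝ (Fin N)

theorem span_single_ne_top (hN : 2 ≤ N) (w : E) :
    Submodule.span ℝ ({w} : Set E) ≠ ⊤ := by
  intro h
  have h1 : Module.finrank ℝ (Submodule.span ℝ ({w} : Set E)) ≤ 1 := by
    rcases eq_or_ne w 0 with rfl | hw
    · rw [Submodule.span_zero_singleton]
      simp
    · rw [finrank_span_singleton hw]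
  rw [h, finrank_top, finrank_euclideanSpace_fin] at h1
  omega

theorem seg_avoids (hN : 2 ≤ N) {x y : E}
    (hspan : Submodule.span ℝ ({x, y} : Set E) = ⊤) :
    ∀ t ∈ Set.Icc (0 : ℝ) 1, x + t • (y - x) ≠ 0 := by
  intro t ht h0
  rcases eq_or_ne t 0 with rfl | htne
  · simp only [zero_smul, add_zero] at h0
    subst h0
    rw [Submodule.span_insert_zero] at hspan
    exact span_single_ne_top hN y hspan
  · have hy : y = (t⁻¹ * (t - 1)) • x := by
      have h1 : t • y = (t - 1) • x := by
        have := h0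
        rw [smul_sub] at this
        have h2 : t • y = t • x - x := by
          rw [eq_sub_iff_add_eq]
          rw [← sub_eq_zero]
          rw [← this]
          abel
        rw [h2, sub_smul, one_smul]
      rw [mul_smul, ← h1, inv_smul_smul₀ htne]
    have hle : Submodule.span ℝ ({x, y} : Set E) ≤ Submodule.span ℝ ({x} : Set E) := by
      rw [Submodule.span_le]
      intro z hz
      rcases hz with rfl | hz
      · exact Submodule.mem_span_singleton_self z
      · simp only [Set.mem_singleton_iff] at hz
        subst hz
        rw [hy]
        exact Submodule.smul_mem _ _ (Submodule.mem_span_singleton_self x)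
    exact span_single_ne_top hN x (top_le_iff.1 (hspan ▸ hle))

end FinslerAux

namespace FinslerAux
variable {N : ℕ} {H : EuclideanSpace ℝ (Fin N) → ℝ}
local notation "E" => EuclideanSpace ℝ (Fin N)

theorem all_key (hN : 2 ≤ N) (h0 : ∀ x : E, 0 ≤ H x)
    (hhom : ∀ (t : ℝ) (x : E), H (t • x) = |t| * H x)
    (hcd : ContDiffOn ℝ (⊤ : ℕ∞) H {(0 : E)}ᶜ) {m : ℝ}
    (hmle : ∀ z : E, z ≠ 0 → ∀ v : E,
      m * ‖v‖ ^ 2 ≤ fderiv ℝ (fderiv ℝ (fun z => H z ^ 2 / 2)) z v v)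
    (x y : E) :
    H ((2 : ℝ)⁻¹ • (x + y)) ^ 2 / 2 + m / 8 * ‖x - y‖ ^ 2
      ≤ (H x ^ 2 / 2 + H y ^ 2 / 2) / 2 := by
  by_cases hspan : Submodule.span ℝ ({x, y} : Set E) = ⊤
  · exact seg_key hcd hmle (seg_avoids hN hspan)
  · obtain ⟨w, hw⟩ : ∃ w : E, w ∉ Submodule.span ℝ ({x, y} : Set E) := by
      by_contra h
      push_neg at h
      exact hspan (Submodule.eq_top_iff'.2 h)
    have key : ∀ ε : ℝ, 0 < ε →
        H ((2 : ℝ)⁻¹ • (x + y) + ε • w) ^ 2 / 2 + m / 8 * ‖x - y‖ ^ 2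
          ≤ (H (x + ε • w) ^ 2 / 2 + H (y + ε • w) ^ 2 / 2) / 2 := by
      intro ε hε
      have hseg : ∀ t ∈ Set.Icc (0 : ℝ) 1,
          (x + ε • w) + t • ((y + ε • w) - (x + ε • w)) ≠ 0 := by
        intro t ht hc
        apply hw
        have h1 : (x + ε • w) + t • ((y + ε • w) - (x + ε • w))
            = (x + t • (y - x)) + ε • w := by module
        rw [h1] at hc
        have h2 : ε • w = -(x + t • (y - x)) := eq_neg_of_add_eq_zero_right hc
        have hmemA : (x + t • (y - x)) ∈ Submodule.span ℝ ({x, y} : Set E) := by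
          apply add_mem
          · exact Submodule.subset_span (Set.mem_insert x {y})
          · apply Submodule.smul_mem
            apply sub_mem
            · exact Submodule.subset_span (Set.mem_insert_of_mem x rfl)
            · exact Submodule.subset_span (Set.mem_insert x {y})
        have hmem : ε • w ∈ Submodule.span ℝ ({x, y} : Set E) := by
          rw [h2]; exact neg_mem hmemA
        have := Submodule.smul_mem _ ε⁻¹ hmem
        rwa [inv_smul_smul₀ (ne_of_gt hε)] at this
      have h := seg_key hcd hmle hseg
      have hmid : (2 : ℝ)⁻¹ • ((x + ε • w) + (y + ε • w))
          = (2 : ℝ)⁻¹ • (x + y) + ε • w := by module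
      have hdiff : (x + ε • w) - (y + ε • w) = x - y := by module
      rw [hmid, hdiff] at h
      exact h
    have hcont := H_cont hN h0 hhom hcd
    set L : ℝ → ℝ := fun ε =>
      (H (x + ε • w) ^ 2 / 2 + H (y + ε • w) ^ 2 / 2) / 2
        - (H ((2 : ℝ)⁻¹ • (x + y) + ε • w) ^ 2 / 2 + m / 8 * ‖x - y‖ ^ 2) with hL
    have hLcont : Continuous L := by
      have c1 : Continuous fun ε : ℝ => H (x + ε • w) :=
        hcont.comp (continuous_const.add (continuous_id.smul continuous_const))
      have c2 : Continuous fun ε : ℝ => H (y + ε • w) :=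
        hcont.comp (continuous_const.add (continuous_id.smul continuous_const))
      have c3 : Continuous fun ε : ℝ => H ((2 : ℝ)⁻¹ • (x + y) + ε • w) :=
        hcont.comp (continuous_const.add (continuous_id.smul continuous_const))
      exact ((((c1.pow 2).div_const 2).add ((c2.pow 2).div_const 2)).div_const 2).sub
        (((c3.pow 2).div_const 2).add continuous_const)
    have hTend : Filter.Tendsto L (nhdsWithin 0 (Set.Ioi 0)) (nhds (L 0)) :=
      (hLcont.tendsto 0).mono_left nhdsWithin_le_nhds
    have hge : ∀ᶠ ε in nhdsWithin 0 (Set.Ioi 0), 0 ≤ L ε := by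
      filter_upwards [self_mem_nhdsWithin] with ε hε
      have := key ε hε
      simp only [hL]
      linarith
    have h0le : (0 : ℝ) ≤ L 0 := ge_of_tendsto hTend hge
    simp only [hL, zero_smul, add_zero] at h0le
    linarith

end FinslerAux

theorem finsler_uniform_convexity {N : ℕ} (hN : 2 ≤ N)
    (H : EuclideanSpace ℝ (Fin N) → ℝ) (hH : IsFinslerMinkowskiNorm H) :
    ∃ C ≥ (1 : ℝ), ∀ x y : EuclideanSpace ℝ (Fin N),
      H ((2 : ℝ)⁻¹ • (x + y)) ^ 2 + (1 / (4 * C ^ 2)) * H (x - y) ^ 2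
        ≤ (H x ^ 2 + H y ^ 2) / 2 := by
  obtain ⟨h0, hiff, hhom, hcd, hpos⟩ := hH
  obtain ⟨m, hm, hmle⟩ := FinslerAux.exists_m hN hhom hcd hpos
  obtain ⟨M, hM, hMle⟩ := FinslerAux.exists_M hN h0 hhom hcd
  refine ⟨max 1 (M / Real.sqrt m), le_max_left _ _, fun x y => ?_⟩
  set C := max 1 (M / Real.sqrt m) with hC
  have hC1 : (1 : ℝ) ≤ C := le_max_left _ _
  have hC0 : (0 : ℝ) < C := lt_of_lt_of_le one_pos hC1
  have hCM : M ^ 2 ≤ m * C ^ 2 := by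
    have h1 : M / Real.sqrt m ≤ C := le_max_right _ _
    have h2 : 0 ≤ M / Real.sqrt m := div_nonneg hM.le (Real.sqrt_nonneg m)
    have h3 : (M / Real.sqrt m) ^ 2 ≤ C ^ 2 := pow_le_pow_left₀ h2 h1 2
    rw [div_pow, Real.sq_sqrt hm.le] at h3
    calc M ^ 2 = m * (M ^ 2 / m) := by field_simp
      _ ≤ m * C ^ 2 := mul_le_mul_of_nonneg_left h3 hm.le
  have key := FinslerAux.all_key hN h0 hhom hcd hmle x y
  have hsq : H (x - y) ^ 2 ≤ M ^ 2 * ‖x - y‖ ^ 2 := by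
    have h1 := hMle (x - y)
    nlinarith [h0 (x - y), norm_nonneg (x - y)]
  have hterm : (1 / (4 * C ^ 2)) * H (x - y) ^ 2 ≤ m / 4 * ‖x - y‖ ^ 2 := by
    have hC2 : (0 : ℝ) < C ^ 2 := by positivity
    have h1 : (1 / (4 * C ^ 2)) * H (x - y) ^ 2
        ≤ (1 / (4 * C ^ 2)) * (M ^ 2 * ‖x - y‖ ^ 2) :=
      mul_le_mul_of_nonneg_left hsq (by positivity)
    apply le_trans h1
    calc (1 / (4 * C ^ 2)) * (M ^ 2 * ‖x - y‖ ^ 2)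
        ≤ (1 / (4 * C ^ 2)) * ((m * C ^ 2) * ‖x - y‖ ^ 2) := by
          exact mul_le_mul_of_nonneg_left
            (mul_le_mul_of_nonneg_right hCM (sq_nonneg _)) (by positivity)
      _ = m / 4 * ‖x - y‖ ^ 2 := by field_simp
  linarith
end
end

section
/- Let H : ℝ^N → ℝ (N ≥ 2) be a Finsler–Minkowski norm, let 2 ≤ p < ∞ and let C ≥ 1 be a constant such that H((x+y)/2)² + (1/(4C²))·H(x−y)² ≤ (H(x)² + H(y)²)/2 for all x, y ∈ ℝ^N. Then for every x, y ∈ ℝ^N, H((x+y)/2)^p + H((x−y)/(2C))^p ≤ H(x)^p/2 + H(y)^p/2. -/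
open scoped InnerProductSpace

noncomputable section

/-- Superadditivity of `t ↦ t ^ r` for `r ≥ 1` on nonnegative reals. -/
lemma aux_rpow_add_rpow_le {a b r : ℝ} (ha : 0 ≤ a) (hb : 0 ≤ b) (hr : 1 ≤ r) :
    a ^ r + b ^ r ≤ (a + b) ^ r := by
  have h := NNReal.rpow_add_rpow_le_add a.toNNReal b.toNNReal hr
  have h' := (NNReal.coe_le_coe).2 h
  rw [NNReal.coe_rpow, NNReal.coe_add, NNReal.coe_rpow, NNReal.coe_rpow, NNReal.coe_add,
    Real.coe_toNNReal a ha, Real.coe_toNNReal b hb, one_div] at h'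
  have hr0 : 0 ≤ r := by linarith
  have := Real.rpow_le_rpow (by positivity) h' hr0
  rwa [Real.rpow_inv_rpow (by positivity) (by linarith)] at this

lemma aux_sq_rpow {t : ℝ} (ht : 0 ≤ t) (p : ℝ) : (t ^ 2) ^ (p / 2) = t ^ p := by
  rw [← Real.rpow_natCast t 2, ← Real.rpow_mul ht]
  congr 1
  ring

/-- The key real inequality. -/
lemma aux_key {a b u v p : ℝ} (hp : 2 ≤ p) (ha : 0 ≤ a) (hb : 0 ≤ b)
    (hu : 0 ≤ u) (hv : 0 ≤ v) (h : a ^ 2 + b ^ 2 ≤ (u ^ 2 + v ^ 2) / 2) :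
    a ^ p + b ^ p ≤ u ^ p / 2 + v ^ p / 2 := by
  have hp2 : 1 ≤ p / 2 := by linarith
  have step1 : a ^ p + b ^ p ≤ (a ^ 2 + b ^ 2) ^ (p / 2) := by
    rw [← aux_sq_rpow ha p, ← aux_sq_rpow hb p]
    exact aux_rpow_add_rpow_le (sq_nonneg a) (sq_nonneg b) hp2
  have step2 : (a ^ 2 + b ^ 2) ^ (p / 2) ≤ ((u ^ 2 + v ^ 2) / 2) ^ (p / 2) :=
    Real.rpow_le_rpow (by positivity) h (by linarith)
  have step3 : ((u ^ 2 + v ^ 2) / 2) ^ (p / 2)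
      ≤ (1 / 2) * (u ^ 2) ^ (p / 2) + (1 / 2) * (v ^ 2) ^ (p / 2) := by
    have hcx := (convexOn_rpow hp2).2 (Set.mem_Ici.2 (sq_nonneg u))
      (Set.mem_Ici.2 (sq_nonneg v)) (by norm_num : (0:ℝ) ≤ 1/2)
      (by norm_num : (0:ℝ) ≤ 1/2) (by norm_num)
    have e1 : (1/2:ℝ) • (u^2:ℝ) + (1/2:ℝ) • (v^2:ℝ) = (u^2+v^2)/2 := by
      rw [smul_eq_mul, smul_eq_mul]; ring
    rw [e1, smul_eq_mul, smul_eq_mul] at hcx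
    exact hcx
  rw [aux_sq_rpow hu p, aux_sq_rpow hv p] at step3
  linarith

theorem finsler_clarkson {N : ℕ} (hN : 2 ≤ N)
    (H : EuclideanSpace ℝ (Fin N) → ℝ) (hH : IsFinslerMinkowskiNorm H)
    (p : ℝ) (hp : 2 ≤ p) (C : ℝ) (hC : 1 ≤ C)
    (hineq : ∀ x y : EuclideanSpace ℝ (Fin N),
      H ((2 : ℝ)⁻¹ • (x + y)) ^ 2 + (1 / (4 * C ^ 2)) * H (x - y) ^ 2
        ≤ (H x ^ 2 + H y ^ 2) / 2) :
    ∀ x y : EuclideanSpace ℝ (Fin N),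
      H ((2 : ℝ)⁻¹ • (x + y)) ^ p + H ((2 * C)⁻¹ • (x - y)) ^ p
        ≤ H x ^ p / 2 + H y ^ p / 2 := by
  obtain ⟨hpos, _, hhom, _, _⟩ := hH
  intro x y
  have hC0 : 0 < C := lt_of_lt_of_le one_pos hC
  have hB : H ((2 * C)⁻¹ • (x - y)) = (2 * C)⁻¹ * H (x - y) := by
    rw [hhom, abs_of_pos (by positivity)]
  have hkey : H ((2 : ℝ)⁻¹ • (x + y)) ^ 2 + H ((2 * C)⁻¹ • (x - y)) ^ 2
      ≤ (H x ^ 2 + H y ^ 2) / 2 := by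
    have := hineq x y
    have hB2 : H ((2 * C)⁻¹ • (x - y)) ^ 2 = (1 / (4 * C ^ 2)) * H (x - y) ^ 2 := by
      have e2 : ((2*C)⁻¹ : ℝ)^2 = 1/(4*C^2) := by
        field_simp
        ring
      rw [hB, mul_pow, e2]
    rw [hB2]; exact this
  have := aux_key hp (hpos _) (hpos _) (hpos x) (hpos y) hkey
  linarith
end
end

section
/- Let H : ℝ^N → ℝ (N ≥ 2) be a Finsler–Minkowski norm and let 2 ≤ p < ∞. Then there exists a constant c > 0 such that for every x ∈ ℝ^N and every y ∈ ℝ^N \ {0}, H(x)^p ≥ H(y)^p + p·H(y)^{p−1}·⟨∇H(y), x − y⟩ + c·H(x − y)^p, where ∇H denotes the gradient of H and ⟨·,·⟩ the Euclidean inner product on ℝ^N. -/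
open scoped InnerProductSpace
open Real Set Filter Topology

noncomputable section

set_option maxHeartbeats 1000000


set_option maxHeartbeats 1000000 in
lemma scalar_key {lam K p : ℝ} (hlam : 0 < lam) (hK : 0 < K) (hp : 2 ≤ p) :
    ∃ c > (0:ℝ), ∀ A B S T : ℝ, 0 ≤ A → 0 ≤ B → 0 ≤ T → |S| ≤ K * T →
      B^2 + 2*B*S + lam*T^2 ≤ A^2 →
      B ^ p + p * B ^ (p-1) * S + c * T ^ p ≤ A ^ p := by
  have hp0 : (0:ℝ) < p := by linarith
  have hp1 : (1:ℝ) ≤ p := by linarith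
  have hq : (1:ℝ) ≤ p/2 := by linarith
  set μ : ℝ := (lam/2) ^ (p/2) with hμdef
  have hμ : 0 < μ := Real.rpow_pos_of_pos (by linarith) _
  set ε : ℝ := min 1 (min (lam/(4*K)) (μ/(2*(1+p*K)))) with hεdef
  have hε1 : ε ≤ 1 := min_le_left _ _
  have hε2 : ε ≤ lam/(4*K) := le_trans (min_le_right _ _) (min_le_left _ _)
  have hε3 : ε ≤ μ/(2*(1+p*K)) := le_trans (min_le_right _ _) (min_le_right _ _)
  have hε0 : 0 < ε := by
    have h1 : (0:ℝ) < lam/(4*K) := by positivity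
    have h2 : (0:ℝ) < μ/(2*(1+p*K)) := by positivity
    exact lt_min one_pos (lt_min h1 h2)
  have hεp2 : 0 < ε^(p-2) := Real.rpow_pos_of_pos hε0 _
  refine ⟨min (μ/2) ((p/2)*lam*ε^(p-2)), lt_min (by positivity) (by positivity), ?_⟩
  set c : ℝ := min (μ/2) ((p/2)*lam*ε^(p-2)) with hcdef
  have hcμ : c ≤ μ/2 := min_le_left _ _
  have hcε : c ≤ (p/2)*lam*ε^(p-2) := min_le_right _ _
  have hc0 : 0 < c := lt_min (by positivity) (by positivity)
  intro A B S T hA hB hT hS hquad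
  have hApow : A ^ p = (A^2) ^ (p/2) := by
    rw [← Real.rpow_two, ← Real.rpow_mul hA]
    congr 1; ring
  rcases eq_or_lt_of_le hT with hT0 | hT0
  · -- T = 0
    have hTz : T = 0 := hT0.symm
    subst hTz
    have hSz : S = 0 := by
      have h1 : |S| ≤ 0 := by simpa using hS
      simpa using le_antisymm h1 (abs_nonneg S)
    subst hSz
    have hq2 : B^2 ≤ A^2 := by nlinarith
    have hBA : B ≤ A := by
      have h2 := Real.sqrt_le_sqrt hq2
      rwa [Real.sqrt_sq hB, Real.sqrt_sq hA] at h2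
    have h2 : B ^ p ≤ A ^ p := Real.rpow_le_rpow hB hBA hp0.le
    rw [Real.zero_rpow (ne_of_gt hp0)]
    simpa using h2
  · -- T > 0
    have hTp0 : (0:ℝ) < T^p := Real.rpow_pos_of_pos hT0 _
    have hTsplit : T^p = T^(p-1) * T := by
      nth_rewrite 1 [show p = (p-1)+1 by ring]
      exact Real.rpow_add_one (ne_of_gt hT0) _
    have hTsplit2 : T^p = T^(p-2) * T^2 := by
      rw [← Real.rpow_two, ← Real.rpow_add hT0]
      congr 1; ring
    rcases le_or_gt B (ε*T) with hBε | hBε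
    · -- Case 1 : B small
      have hεK : 2*(ε*K) ≤ lam/2 := by
        rw [le_div_iff₀ (by positivity : (0:ℝ) < 4*K)] at hε2
        nlinarith
      have hA2 : (lam/2)*T^2 ≤ A^2 := by
        have h1 : -(K*T) ≤ S := neg_le_of_abs_le hS
        have e1 : 0 ≤ B*(S + K*T) := mul_nonneg hB (by linarith)
        have e2 : 0 ≤ (ε*T - B)*(K*T) :=
          mul_nonneg (by linarith) (by positivity)
        have e3 : 2*(ε*K)*T^2 ≤ (lam/2)*T^2 :=
          mul_le_mul_of_nonneg_right hεK (sq_nonneg T)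
        nlinarith [sq_nonneg B]
      have hAp : μ * T^p ≤ A ^ p := by
        rw [hApow]
        have h1 : ((lam/2)*T^2) ^ (p/2) ≤ (A^2)^(p/2) :=
          Real.rpow_le_rpow (by positivity) hA2 (by linarith)
        have h2 : ((lam/2)*T^2) ^ (p/2) = μ * T^p := by
          rw [Real.mul_rpow (by linarith) (by positivity), ← Real.rpow_two,
            ← Real.rpow_mul hT]
          rw [show (2:ℝ) * (p/2) = p by ring]
        rw [← h2]; exact h1
      have hεpow : ε^p ≤ ε := by
        have := Real.rpow_le_rpow_of_exponent_ge hε0 hε1 hp1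
        simpa using this
      have hεpow1 : ε^(p-1) ≤ ε := by
        have := Real.rpow_le_rpow_of_exponent_ge hε0 hε1 (by linarith : (1:ℝ) ≤ p - 1)
        simpa using this
      have hBp : B ^ p ≤ ε * T^p := by
        calc B ^ p ≤ (ε*T) ^ p := Real.rpow_le_rpow hB hBε hp0.le
        _ = ε^p * T^p := Real.mul_rpow hε0.le hT
        _ ≤ ε * T^p := mul_le_mul_of_nonneg_right hεpow hTp0.le
      have hSKT : 0 ≤ K * T := le_trans (abs_nonneg S) hS
      have hBS : p * B^(p-1) * S ≤ p*K*ε * T^p := by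
        have h1 : B^(p-1) ≤ (ε*T)^(p-1) := Real.rpow_le_rpow hB hBε (by linarith)
        have h2 : (ε*T)^(p-1) = ε^(p-1) * T^(p-1) := Real.mul_rpow hε0.le hT
        have h4 : S ≤ K*T := le_of_abs_le hS
        have hBpm : 0 ≤ B^(p-1) := Real.rpow_nonneg hB _
        have hTpm : 0 < T^(p-1) := Real.rpow_pos_of_pos hT0 _
        have h5 : B^(p-1) ≤ ε * T^(p-1) := by
          rw [h2] at h1
          exact le_trans h1 (mul_le_mul_of_nonneg_right hεpow1 hTpm.le)
        calc p * B^(p-1) * S ≤ p * B^(p-1) * (K*T) :=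
              mul_le_mul_of_nonneg_left h4 (by positivity)
        _ ≤ p * (ε*T^(p-1)) * (K*T) :=
              mul_le_mul_of_nonneg_right
                (mul_le_mul_of_nonneg_left h5 hp0.le) hSKT
        _ = p*K*ε * (T^(p-1)*T) := by ring
        _ = p*K*ε*T^p := by rw [← hTsplit]
      have hεμ : ε*(1+p*K) ≤ μ/2 := by
        rw [le_div_iff₀ (by positivity : (0:ℝ) < 2*(1+p*K))] at hε3
        nlinarith
      have e4 : (ε*(1+p*K))*T^p ≤ (μ/2)*T^p := mul_le_mul_of_nonneg_right hεμ hTp0.le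
      have e5 : ε*T^p + p*K*ε*T^p = (ε*(1+p*K))*T^p := by ring
      have e6 : c*T^p ≤ (μ/2)*T^p := mul_le_mul_of_nonneg_right hcμ hTp0.le
      linarith
    · -- Case 2 : B large
      have hB0 : 0 < B := lt_trans (by positivity) hBε
      have hBsub2 : B^(p-2) * B^2 = B^p := by
        rw [← Real.rpow_two, ← Real.rpow_add hB0]
        congr 1; ring
      have hBsub3 : B^(p-2) * B = B^(p-1) := by
        rw [show p - 1 = (p-2)+1 by ring]
        exact (Real.rpow_add_one (ne_of_gt hB0) _).symm
      have hBp2 : 0 < B^(p-2) := Real.rpow_pos_of_pos hB0 _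
      have hc2 : c * T^p ≤ (p/2)*lam*B^(p-2)*T^2 := by
        have h1 : T^(p-2) ≤ (B/ε)^(p-2) := by
          apply Real.rpow_le_rpow hT ((le_div_iff₀ hε0).mpr (by nlinarith)) (by linarith)
        have h2 : (B/ε)^(p-2) = B^(p-2)/ε^(p-2) := Real.div_rpow hB0.le hε0.le _
        have hT2 : (0:ℝ) < T^2 := by positivity
        have hTpm2 : 0 < T^(p-2) := Real.rpow_pos_of_pos hT0 _
        rw [h2] at h1
        calc c * T^p = c * T^(p-2) * T^2 := by rw [hTsplit2]; ring
        _ ≤ ((p/2)*lam*ε^(p-2)) * (B^(p-2)/ε^(p-2)) * T^2 := by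
            apply mul_le_mul_of_nonneg_right _ hT2.le
            apply mul_le_mul hcε h1 hTpm2.le (by positivity)
        _ = (p/2)*lam*B^(p-2)*T^2 := by field_simp
      set V : ℝ := B^2 + 2*B*S + lam*T^2 with hVdef
      have hBp : 0 < B^p := Real.rpow_pos_of_pos hB0 _
      rcases le_or_gt 0 V with hV | hV
      · -- V ≥ 0 : Bernoulli
        set w : ℝ := (V - B^2)/B^2 with hwdef
        have h1w : 1 + w = V/B^2 := by
          rw [hwdef]; field_simp; ring
        have hw1 : -1 ≤ w := by
          have h0 : 0 ≤ V/B^2 := by positivity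
          linarith [h1w ▸ h0]
        have hbern : 1 + (p/2) * w ≤ (1+w) ^ (p/2) :=
          one_add_mul_self_le_rpow_one_add hw1 hq
        have hVq : V ^ (p/2) = (B^2)^(p/2) * (1+w)^(p/2) := by
          rw [← Real.mul_rpow (by positivity) (by linarith : (0:ℝ) ≤ 1 + w)]
          congr 1
          rw [h1w]
          field_simp
        have hB2q : (B^2)^(p/2) = B^p := by
          rw [← Real.rpow_two, ← Real.rpow_mul hB0.le]
          rw [show (2:ℝ) * (p/2) = p by ring]
        have hAV : V ^ (p/2) ≤ A ^ p := by
          rw [hApow]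
          exact Real.rpow_le_rpow hV hquad (by linarith)
        have hkey : B^p * (1 + (p/2)*w) ≤ V ^ (p/2) := by
          rw [hVq, hB2q]
          exact mul_le_mul_of_nonneg_left hbern hBp.le
        have hw2 : B^p * w = B^(p-2)*(V - B^2) := by
          rw [hwdef, ← hBsub2]
          field_simp
        have hexpand : B^p * (1 + (p/2)*w) = B^p + p*B^(p-1)*S + (p/2)*lam*B^(p-2)*T^2 := by
          have h' : B^p * w = B^(p-2)*(2*B*S + lam*T^2) := by
            rw [hw2, hVdef]; ring
          calc B^p * (1+(p/2)*w) = B^p + (p/2)*(B^p*w) := by ring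
          _ = B^p + (p/2)*(B^(p-2)*(2*B*S+lam*T^2)) := by rw [h']
          _ = B^p + p*(B^(p-2)*B)*S + (p/2)*lam*B^(p-2)*T^2 := by ring
          _ = B^p + p*B^(p-1)*S + (p/2)*lam*B^(p-2)*T^2 := by rw [hBsub3]
        linarith
      · -- V < 0
        have hS2 : 2*B*S ≤ -B^2 - lam*T^2 := by
          rw [hVdef] at hV; linarith
        have h1 : p*B^(p-1)*S = (p/2)*B^(p-2)*(2*B*S) := by
          rw [← hBsub3]; ring
        have h2 : (p/2)*B^(p-2)*(2*B*S) ≤ (p/2)*B^(p-2)*(-B^2 - lam*T^2) :=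
          mul_le_mul_of_nonneg_left hS2 (by positivity)
        have h3 : (p/2)*B^(p-2)*(-B^2-lam*T^2) = -(p/2)*B^p - (p/2)*lam*B^(p-2)*T^2 := by
          rw [← hBsub2]; ring
        have hAp : 0 ≤ A^p := Real.rpow_nonneg hA _
        have h5 : 0 ≤ (p/2 - 1)*B^p := mul_nonneg (by linarith) hBp.le
        linarith


theorem finsler_strong_convexity_inequality {N : ℕ} (hN : 2 ≤ N)
    (H : EuclideanSpace ℝ (Fin N) → ℝ) (hH : IsFinslerMinkowskiNorm H)
    (p : ℝ) (hp : 2 ≤ p) :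
    ∃ c > (0 : ℝ), ∀ x : EuclideanSpace ℝ (Fin N), ∀ y : EuclideanSpace ℝ (Fin N), y ≠ 0 →
      H y ^ p + p * H y ^ (p - 1) * ⟪gradient H y, x - y⟫_ℝ + c * H (x - y) ^ p
        ≤ H x ^ p := by
  obtain ⟨h0, h1, h2, hsm, hpos⟩ := hH
  have hH0 : H 0 = 0 := (h1 0).2 rfl
  have hHpos : ∀ z : EuclideanSpace ℝ (Fin N), z ≠ 0 → 0 < H z := fun z hz =>
    lt_of_le_of_ne (h0 z) (fun h => hz ((h1 z).1 h.symm))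
  have h2pos : ∀ (t : ℝ), 0 < t → ∀ x : EuclideanSpace ℝ (Fin N), H (t • x) = t * H x := by
    intro t ht x; rw [h2, abs_of_pos ht]
  have hopen : IsOpen ({(0 : EuclideanSpace ℝ (Fin N))}ᶜ) := isOpen_compl_singleton
  -- sphere facts
  set S : Set (EuclideanSpace ℝ (Fin N)) := Metric.sphere 0 1 with hSdef
  have hScomp : IsCompact S := isCompact_sphere _ _
  have hSne : S.Nonempty := by
    refine ⟨EuclideanSpace.single ⟨0, by omega⟩ (1:ℝ), ?_⟩
    simp [hSdef, mem_sphere_zero_iff_norm, EuclideanSpace.norm_single]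
  have hSsub : S ⊆ {(0 : EuclideanSpace ℝ (Fin N))}ᶜ := by
    intro z hz
    simp only [hSdef, mem_sphere_zero_iff_norm] at hz
    intro h; rw [Set.mem_singleton_iff] at h
    rw [h] at hz; simp at hz
  have hSne0 : ∀ z ∈ S, z ≠ 0 := fun z hz h => hSsub hz (by simp [h])
  have hproj : ∀ x : EuclideanSpace ℝ (Fin N), x ≠ 0 →
      ((‖x‖⁻¹ • x) ∈ S ∧ x = ‖x‖ • (‖x‖⁻¹ • x)) := by
    intro x hx
    constructor
    · simp only [hSdef, mem_sphere_zero_iff_norm]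
      exact norm_smul_inv_norm hx
    · rw [smul_inv_smul₀ (norm_ne_zero_iff.2 hx)]
  -- upper bound M
  obtain ⟨zM, hzM, hzMmax⟩ := hScomp.exists_isMaxOn hSne (hsm.continuousOn.mono hSsub)
  set M : ℝ := max (H zM) 1 with hMdef
  have hM : 0 < M := lt_of_lt_of_le one_pos (le_max_right _ _)
  have hMb : ∀ x : EuclideanSpace ℝ (Fin N), H x ≤ M * ‖x‖ := by
    intro x
    by_cases hx : x = 0
    · simp [hx, hH0]
    · obtain ⟨hu, hxu⟩ := hproj x hx
      have hval : H x = ‖x‖ * H (‖x‖⁻¹ • x) := by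
        nth_rewrite 1 [hxu]
        exact h2pos _ (norm_pos_iff.2 hx) _
      have h3 : H (‖x‖⁻¹ • x) ≤ M := le_trans (hzMmax hu) (le_max_left _ _)
      have h4 : 0 ≤ ‖x‖ := norm_nonneg x
      rw [hval]; nlinarith
  -- continuity of H
  have hHcont : Continuous H := by
    rw [continuous_iff_continuousAt]
    intro z
    by_cases hz : z = 0
    · subst hz
      have htend : Tendsto H (𝓝 0) (𝓝 0) := by
        apply squeeze_zero h0 hMb
        have hcn : Continuous fun x : EuclideanSpace ℝ (Fin N) => M * ‖x‖ :=
          continuous_const.mul continuous_norm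
        simpa using hcn.tendsto 0
      simpa [ContinuousAt, hH0] using htend
    · exact (hsm.continuousOn.continuousAt (hopen.mem_nhds hz))
  -- differentiability
  have hat := fun (z : EuclideanSpace ℝ (Fin N)) (hz : z ≠ 0) =>
    hsm.contDiffAt (hopen.mem_nhds hz)
  have hdH : ∀ z : EuclideanSpace ℝ (Fin N), z ≠ 0 → DifferentiableAt ℝ H z := fun z hz =>
    (hat z hz).differentiableAt (by simp)
  set f : EuclideanSpace ℝ (Fin N) → ℝ := fun z => H z ^ 2 / 2 with hfdef
  have hsmf : ContDiffOn ℝ (⊤:ℕ∞) f {(0 : EuclideanSpace ℝ (Fin N))}ᶜ := (hsm.pow 2).div_const 2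
  have hatf := fun (z : EuclideanSpace ℝ (Fin N)) (hz : z ≠ 0) =>
    hsmf.contDiffAt (hopen.mem_nhds hz)
  have hdf : ∀ z : EuclideanSpace ℝ (Fin N), z ≠ 0 → DifferentiableAt ℝ f z := fun z hz =>
    (hatf z hz).differentiableAt (by simp)
  set G := fderiv ℝ f with hGdef
  set D := fderiv ℝ G with hDdef
  have hG : ∀ z : EuclideanSpace ℝ (Fin N), z ≠ 0 → HasFDerivAt G (D z) z := by
    intro z hz
    have h3 : ContDiffAt ℝ 1 G z := (hatf z hz).fderiv_right (by exact WithTop.coe_le_coe.mpr le_top)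
    exact (h3.differentiableAt one_ne_zero).hasFDerivAt
  -- chain rule : G y = H y • fderiv H y
  have hfD : ∀ y : EuclideanSpace ℝ (Fin N), y ≠ 0 → G y = H y • fderiv ℝ H y := by
    intro y hy
    have hHy := (hdH y hy).hasFDerivAt
    have hmul := (hHy.mul hHy).const_mul (2⁻¹ : ℝ)
    have hfun : f = fun z => (2⁻¹:ℝ) * (H z * H z) := by funext z; simp only [hfdef]; ring
    have h5 : HasFDerivAt f ((2⁻¹:ℝ) • (H y • fderiv ℝ H y + H y • fderiv ℝ H y)) y := by
      rw [hfun]; exact hmul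
    have h6 : (2⁻¹:ℝ) • (H y • fderiv ℝ H y + H y • fderiv ℝ H y) = H y • fderiv ℝ H y := by
      ext v
      simp only [ContinuousLinearMap.add_apply, ContinuousLinearMap.smul_apply,
        smul_eq_mul]
      ring
    rw [← h6]
    exact h5.fderiv
  -- homogeneity of fderiv H (degree 0)
  have hderivHhom : ∀ (t : ℝ), 0 < t → ∀ x : EuclideanSpace ℝ (Fin N), x ≠ 0 →
      fderiv ℝ H (t • x) = fderiv ℝ H x := by
    intro t ht x hx
    have ht0 : t ≠ 0 := ne_of_gt ht
    have htx : t • x ≠ 0 := smul_ne_zero ht0 hx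
    have hsc : HasFDerivAt (fun z : EuclideanSpace ℝ (Fin N) => t • z)
        (t • ContinuousLinearMap.id ℝ (EuclideanSpace ℝ (Fin N))) x :=
      (hasFDerivAt_id x).const_smul t
    have hL : HasFDerivAt (fun z : EuclideanSpace ℝ (Fin N) => H (t • z))
        ((fderiv ℝ H (t • x)).comp (t • ContinuousLinearMap.id ℝ (EuclideanSpace ℝ (Fin N)))) x :=
      ((hdH _ htx).hasFDerivAt).comp x hsc
    have hR : HasFDerivAt (fun z : EuclideanSpace ℝ (Fin N) => t * H z)
        (t • fderiv ℝ H x) x := (hdH x hx).hasFDerivAt.const_mul t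
    have heq : (fun z : EuclideanSpace ℝ (Fin N) => H (t • z)) = fun z => t * H z := by
      funext z; rw [h2, abs_of_pos ht]
    rw [heq] at hL
    have huniq := hL.unique hR
    ext v
    have h5 := DFunLike.congr_fun huniq v
    simp only [ContinuousLinearMap.coe_comp', Function.comp_apply,
      ContinuousLinearMap.smul_apply, ContinuousLinearMap.coe_id', id_eq,
      ContinuousLinearMap.coe_smul', Pi.smul_apply, smul_eq_mul, map_smul] at h5
    exact mul_left_cancel₀ ht0 h5
  -- homogeneity of G (degree 1)
  have hGhom : ∀ (t : ℝ), 0 < t → ∀ x : EuclideanSpace ℝ (Fin N), x ≠ 0 →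
      G (t • x) = t • G x := by
    intro t ht x hx
    have ht0 : t ≠ 0 := ne_of_gt ht
    have htx : t • x ≠ 0 := smul_ne_zero ht0 hx
    have hsc : HasFDerivAt (fun z : EuclideanSpace ℝ (Fin N) => t • z)
        (t • ContinuousLinearMap.id ℝ (EuclideanSpace ℝ (Fin N))) x :=
      (hasFDerivAt_id x).const_smul t
    have hL : HasFDerivAt (fun z : EuclideanSpace ℝ (Fin N) => f (t • z))
        ((G (t • x)).comp (t • ContinuousLinearMap.id ℝ (EuclideanSpace ℝ (Fin N)))) x :=
      ((hdf _ htx).hasFDerivAt).comp x hsc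
    have hR : HasFDerivAt (fun z : EuclideanSpace ℝ (Fin N) => t ^ 2 * f z)
        ((t ^ 2) • G x) x := (hdf x hx).hasFDerivAt.const_mul (t ^ 2)
    have heq : (fun z : EuclideanSpace ℝ (Fin N) => f (t • z)) = fun z => t ^ 2 * f z := by
      funext z; simp only [hfdef]; rw [h2, mul_pow, sq_abs]; ring
    rw [heq] at hL
    have huniq := hL.unique hR
    ext v
    have h5 := DFunLike.congr_fun huniq v
    simp only [ContinuousLinearMap.coe_comp', Function.comp_apply,
      ContinuousLinearMap.smul_apply, ContinuousLinearMap.coe_id', id_eq,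
      ContinuousLinearMap.coe_smul', Pi.smul_apply, smul_eq_mul, map_smul] at h5 ⊢
    have h6 : t * (t * (G x) v) = t * (t * (G x) v) := rfl
    nlinarith [h5]
  -- homogeneity of D (degree 0)
  have hDhom : ∀ (t : ℝ), 0 < t → ∀ x : EuclideanSpace ℝ (Fin N), x ≠ 0 →
      ∀ u v : EuclideanSpace ℝ (Fin N), D (t • x) u v = D x u v := by
    intro t ht x hx u v
    have ht0 : t ≠ 0 := ne_of_gt ht
    have htx : t • x ≠ 0 := smul_ne_zero ht0 hx
    have hsc : HasFDerivAt (fun z : EuclideanSpace ℝ (Fin N) => t • z)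
        (t • ContinuousLinearMap.id ℝ (EuclideanSpace ℝ (Fin N))) x :=
      (hasFDerivAt_id x).const_smul t
    have hL : HasFDerivAt (fun z : EuclideanSpace ℝ (Fin N) => G (t • z))
        ((D (t • x)).comp (t • ContinuousLinearMap.id ℝ (EuclideanSpace ℝ (Fin N)))) x :=
      (hG _ htx).comp x hsc
    have hR : HasFDerivAt (fun z : EuclideanSpace ℝ (Fin N) => t • G z) (t • D x) x :=
      (hG x hx).const_smul t
    have hEq : (fun z : EuclideanSpace ℝ (Fin N) => G (t • z)) =ᶠ[nhds x]
        (fun z => t • G z) := by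
      filter_upwards [hopen.mem_nhds hx] with z hz
      exact hGhom t ht z hz
    have hL' := hL.congr_of_eventuallyEq hEq.symm
    have huniq := hL'.unique hR
    have h5 := DFunLike.congr_fun (DFunLike.congr_fun huniq u) v
    simp only [ContinuousLinearMap.coe_comp', Function.comp_apply,
      ContinuousLinearMap.smul_apply, ContinuousLinearMap.coe_id', id_eq,
      ContinuousLinearMap.coe_smul', Pi.smul_apply, smul_eq_mul, map_smul] at h5
    exact mul_left_cancel₀ ht0 h5
  -- lambda via compactness
  have hGsm : ContDiffOn ℝ (⊤:ℕ∞) G {(0 : EuclideanSpace ℝ (Fin N))}ᶜ := by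
    have := hsmf.fderiv_of_isOpen hopen (m := (⊤:ℕ∞)) (by exact_mod_cast le_top)
    exact this
  have hDcont : ContinuousOn D {(0 : EuclideanSpace ℝ (Fin N))}ᶜ :=
    hGsm.continuousOn_fderiv_of_isOpen hopen (by exact_mod_cast le_top)
  set Φ : (EuclideanSpace ℝ (Fin N)) × (EuclideanSpace ℝ (Fin N)) → ℝ :=
    fun q => D q.1 q.2 q.2 with hΦdef
  have hΦcont : ContinuousOn Φ (S ×ˢ S) := by
    have h1 : ContinuousOn (fun q : (EuclideanSpace ℝ (Fin N)) × (EuclideanSpace ℝ (Fin N)) =>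
        D q.1) (S ×ˢ S) := by
      apply hDcont.comp continuousOn_fst
      intro q hq
      exact hSsub (Set.mem_prod.1 hq).1
    exact (h1.clm_apply continuousOn_snd).clm_apply continuousOn_snd
  obtain ⟨q₀, hq₀S, hq₀min⟩ := (hScomp.prod hScomp).exists_isMinOn (hSne.prod hSne) hΦcont
  set lam : ℝ := Φ q₀ with hlamdef
  have hq₀1 : q₀.1 ∈ S := (Set.mem_prod.1 hq₀S).1
  have hq₀2 : q₀.2 ∈ S := (Set.mem_prod.1 hq₀S).2
  have hlam : 0 < lam := hpos q₀.1 (hSne0 _ hq₀1) q₀.2 (hSne0 _ hq₀2)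
  have hlamle : ∀ z v : EuclideanSpace ℝ (Fin N), z ≠ 0 → lam * ‖v‖^2 ≤ D z v v := by
    intro z v hz
    by_cases hv : v = 0
    · simp [hv]
    · obtain ⟨hz', hzz⟩ := hproj z hz
      obtain ⟨hv', hvv⟩ := hproj v hv
      have h3 : lam ≤ D (‖z‖⁻¹ • z) (‖v‖⁻¹ • v) (‖v‖⁻¹ • v) :=
        hq₀min (Set.mk_mem_prod hz' hv')
      have h4 : D z (‖v‖⁻¹ • v) (‖v‖⁻¹ • v) = D (‖z‖⁻¹ • z) (‖v‖⁻¹ • v) (‖v‖⁻¹ • v) := by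
        nth_rewrite 1 [hzz]
        exact hDhom ‖z‖ (norm_pos_iff.2 hz) _ (smul_ne_zero (inv_ne_zero (norm_ne_zero_iff.2 hz)) hz) _ _
      have hquadscale : ∀ (u : EuclideanSpace ℝ (Fin N)) (a : ℝ),
          D z (a • u) (a • u) = a^2 * D z u u := by
        intro u a
        rw [map_smul]
        simp only [ContinuousLinearMap.smul_apply, map_smul, smul_eq_mul]
        ring
      have h5 : D z v v = ‖v‖^2 * D z (‖v‖⁻¹ • v) (‖v‖⁻¹ • v) := by
        calc D z v v = D z (‖v‖ • (‖v‖⁻¹ • v)) (‖v‖ • (‖v‖⁻¹ • v)) := by rw [← hvv]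
        _ = ‖v‖^2 * D z (‖v‖⁻¹ • v) (‖v‖⁻¹ • v) := hquadscale _ _
      have h6 : 0 < ‖v‖^2 := pow_pos (norm_pos_iff.2 hv) 2
      rw [h5, h4]
      nlinarith
  -- bound K on fderiv H
  have hdHcont : ContinuousOn (fderiv ℝ H) {(0 : EuclideanSpace ℝ (Fin N))}ᶜ :=
    hsm.continuousOn_fderiv_of_isOpen hopen (by exact_mod_cast le_top)
  obtain ⟨zK, hzK, hzKmax⟩ := hScomp.exists_isMaxOn hSne
    ((hdHcont.mono hSsub).norm)
  set K : ℝ := max ‖fderiv ℝ H zK‖ 1 with hKdef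
  have hK : 0 < K := lt_of_lt_of_le one_pos (le_max_right _ _)
  have hKb : ∀ y : EuclideanSpace ℝ (Fin N), y ≠ 0 → ‖fderiv ℝ H y‖ ≤ K := by
    intro y hy
    obtain ⟨hy', hyy⟩ := hproj y hy
    have h3 : fderiv ℝ H y = fderiv ℝ H (‖y‖⁻¹ • y) := by
      nth_rewrite 1 [hyy]
      exact hderivHhom ‖y‖ (norm_pos_iff.2 hy) _ (hSne0 _ hy')
    rw [h3]
    exact le_trans (hzKmax hy') (le_max_left _ _)
  -- Taylor inequality along segments avoiding 0
  have htaylor : ∀ y : EuclideanSpace ℝ (Fin N), y ≠ 0 → ∀ x : EuclideanSpace ℝ (Fin N),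
      (∀ t ∈ Set.Icc (0:ℝ) 1, y + t • (x - y) ≠ 0) →
      f y + G y (x - y) + lam/2 * ‖x - y‖^2 ≤ f x := by
    intro y hy x hseg
    set v : EuclideanSpace ℝ (Fin N) := x - y with hvdef
    set γ : ℝ → EuclideanSpace ℝ (Fin N) := fun t => y + t • v with hγdef
    have hγd : ∀ t : ℝ, HasDerivAt γ v t := by
      intro t
      have := ((hasDerivAt_id t).smul_const v).const_add y
      simpa [hγdef] using this
    set U : Set ℝ := {t : ℝ | γ t ≠ 0} with hUdef
    have hUo : IsOpen U := by
      have hγc : Continuous γ := continuous_const.add (continuous_id.smul continuous_const)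
      have : U = γ ⁻¹' {(0:EuclideanSpace ℝ (Fin N))}ᶜ := rfl
      rw [this]
      exact hopen.preimage hγc
    have hIccU : Set.Icc (0:ℝ) 1 ⊆ U := fun t ht => hseg t ht
    set ψ : ℝ → ℝ := fun t => f (γ t) - t * G y v - lam/2 * ‖v‖^2 * t^2 with hψdef
    set ψ' : ℝ → ℝ := fun t => G (γ t) v - G y v - lam * ‖v‖^2 * t with hψ'def
    have hψd : ∀ t ∈ U, HasDerivAt ψ (ψ' t) t := by
      intro t ht
      have h1 : HasDerivAt (fun s => f (γ s)) (G (γ t) v) t :=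
        ((hdf _ ht).hasFDerivAt).comp_hasDerivAt t (hγd t)
      have h2 : HasDerivAt (fun s : ℝ => s * G y v) (G y v) t := by
        simpa using (hasDerivAt_id t).mul_const (G y v)
      have h3 : HasDerivAt (fun s : ℝ => lam/2 * ‖v‖^2 * s^2) (lam/2 * ‖v‖^2 * (2*t)) t := by
        have := (hasDerivAt_pow 2 t).const_mul (lam/2 * ‖v‖^2)
        simpa [mul_assoc] using this
      have h4 := (h1.sub h2).sub h3
      have e : ψ' t = G (γ t) v - G y v - lam/2 * ‖v‖^2 * (2*t) := by
        simp only [hψ'def]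
        ring
      rw [e]
      exact h4
    have hψ'd : ∀ t ∈ U, HasDerivAt ψ' (D (γ t) v v - lam * ‖v‖^2) t := by
      intro t ht
      have h1 : HasDerivAt (fun s => G (γ s)) (D (γ t) v) t :=
        (hG _ ht).comp_hasDerivAt t (hγd t)
      have h2 : HasDerivAt (fun s => G (γ s) v) (D (γ t) v v) t := by
        have := h1.clm_apply (hasDerivAt_const t v)
        simpa using this
      have h3 : HasDerivAt (fun s : ℝ => lam * ‖v‖^2 * s) (lam * ‖v‖^2) t := by
        simpa using (hasDerivAt_id t).const_mul (lam * ‖v‖^2)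
      exact (h2.sub_const (G y v)).sub h3
    have hmono : MonotoneOn ψ' (Set.Icc 0 1) := by
      apply monotoneOn_of_deriv_nonneg (convex_Icc 0 1)
      · exact fun t ht => ((hψ'd t (hIccU ht)).continuousAt).continuousWithinAt
      · intro t ht
        rw [interior_Icc] at ht
        exact (hψ'd t (hIccU (Set.Ioo_subset_Icc_self ht))).differentiableAt.differentiableWithinAt
      · intro t ht
        rw [interior_Icc] at ht
        have hne : γ t ≠ 0 := hIccU (Set.Ioo_subset_Icc_self ht)
        rw [(hψ'd t hne).deriv]
        have := hlamle (γ t) v hne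
        linarith
    have hψ'0 : ψ' 0 = 0 := by
      simp only [hψ'def, hγdef]
      simp
    have hψcont : ContinuousOn ψ (Set.Icc 0 1) :=
      fun t ht => ((hψd t (hIccU ht)).continuousAt).continuousWithinAt
    obtain ⟨ξ, hξ, hsl⟩ := exists_hasDerivAt_eq_slope ψ ψ' one_pos hψcont
      (fun t ht => hψd t (hIccU (Set.Ioo_subset_Icc_self ht)))
    have h0ξ : ψ' 0 ≤ ψ' ξ :=
      hmono (Set.left_mem_Icc.2 zero_le_one) (Set.Ioo_subset_Icc_self hξ) hξ.1.le
    have hψ10 : ψ 0 ≤ ψ 1 := by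
      rw [hψ'0] at h0ξ
      have : (0:ℝ) ≤ (ψ 1 - ψ 0) / (1 - 0) := le_trans h0ξ (le_of_eq hsl)
      simp at this
      linarith
    have hγ0 : γ 0 = y := by simp [hγdef]
    have hγ1 : γ 1 = x := by simp [hγdef, hvdef]
    simp only [hψdef, hγ0, hγ1] at hψ10
    simp only [one_pow, mul_one, one_mul] at hψ10
    linarith
  -- good case: x not in the span of y
  have hgood : ∀ y : EuclideanSpace ℝ (Fin N), y ≠ 0 →
      ∀ x : EuclideanSpace ℝ (Fin N), x ∉ (Submodule.span ℝ {y} : Submodule ℝ (EuclideanSpace ℝ (Fin N))) →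
      H y^2 + 2*(H y)*(fderiv ℝ H y (x - y)) + lam*‖x - y‖^2 ≤ H x^2 := by
    intro y hy x hx
    have hseg : ∀ t ∈ Set.Icc (0:ℝ) 1, y + t • (x - y) ≠ 0 := by
      intro t ht hzero
      rcases eq_or_ne t 0 with h | h
      · subst h; simp at hzero; exact hy hzero
      · apply hx
        have h3 : t • x = -y + t • y := by
          have h4 : y + (t • x - t • y) = 0 := by rw [← smul_sub]; exact hzero
          have h5 : t • x - t • y = -y := eq_neg_of_add_eq_zero_right h4
          exact sub_eq_iff_eq_add.mp h5
        have h6 : x = t⁻¹ • (-y + t • y) := by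
          rw [← h3, inv_smul_smul₀ h]
        rw [h6]
        refine Submodule.smul_mem _ _ (Submodule.add_mem _ (Submodule.neg_mem _ ?_) (Submodule.smul_mem _ _ ?_)) <;>
          exact Submodule.mem_span_singleton_self y
    have h7 := htaylor y hy x hseg
    have h8 : G y (x - y) = H y * (fderiv ℝ H y (x - y)) := by
      rw [hfD y hy]
      simp [ContinuousLinearMap.smul_apply, smul_eq_mul]
    rw [h8] at h7
    have h9 : f y = H y ^2/2 := rfl
    have h10 : f x = H x ^2/2 := rfl
    rw [h9, h10] at h7
    linarith
  -- full quadratic inequality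
  have hkeyquad : ∀ y : EuclideanSpace ℝ (Fin N), y ≠ 0 → ∀ x : EuclideanSpace ℝ (Fin N),
      H y^2 + 2*(H y)*(fderiv ℝ H y (x - y)) + lam*‖x - y‖^2 ≤ H x^2 := by
    intro y hy x
    by_cases hx : x ∈ (Submodule.span ℝ {y} : Submodule ℝ (EuclideanSpace ℝ (Fin N)))
    · -- perturb
      have hspan_ne : (Submodule.span ℝ {y} : Submodule ℝ (EuclideanSpace ℝ (Fin N))) ≠ ⊤ := by
        intro htop
        have hfr1 : Module.finrank ℝ (Submodule.span ℝ {y} : Submodule ℝ (EuclideanSpace ℝ (Fin N))) = 1 :=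
          finrank_span_singleton hy
        rw [htop, finrank_top] at hfr1
        rw [finrank_euclideanSpace_fin] at hfr1
        omega
      obtain ⟨w, hw⟩ : ∃ w : EuclideanSpace ℝ (Fin N),
          w ∉ (Submodule.span ℝ {y} : Submodule ℝ (EuclideanSpace ℝ (Fin N))) := by
        by_contra hcon
        push_neg at hcon
        exact hspan_ne (Submodule.eq_top_iff'.2 hcon)
      have hstep : ∀ ε : ℝ, 0 < ε →
          H y^2 + 2*(H y)*(fderiv ℝ H y (x + ε • w - y)) + lam*‖x + ε • w - y‖^2 ≤ H (x + ε • w)^2 := by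
        intro ε hε
        apply hgood y hy
        intro hmem
        apply hw
        have h3 : ε • w = (x + ε • w) - x := by abel
        have h4 : ε • w ∈ (Submodule.span ℝ {y} : Submodule ℝ (EuclideanSpace ℝ (Fin N))) := by
          rw [h3]; exact Submodule.sub_mem _ hmem hx
        have h5 : w = ε⁻¹ • (ε • w) := (inv_smul_smul₀ (ne_of_gt hε) w).symm
        rw [h5]
        exact Submodule.smul_mem _ _ h4
      have hcurve : Continuous fun ε : ℝ => x + ε • w :=
        continuous_const.add (continuous_id.smul continuous_const)
      have hc1 : Tendsto (fun ε : ℝ => H (x + ε • w)^2) (nhdsWithin 0 (Set.Ioi 0)) (nhds (H x^2)) := by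
        have hc : Continuous fun ε : ℝ => H (x + ε • w)^2 := (hHcont.comp hcurve).pow 2
        have h2' := (hc.tendsto 0).mono_left (nhdsWithin_le_nhds (s := Set.Ioi (0:ℝ)))
        simpa using h2'
      have hc2 : Tendsto (fun ε : ℝ => H y^2 + 2*(H y)*(fderiv ℝ H y (x + ε • w - y)) + lam*‖x + ε • w - y‖^2)
          (nhdsWithin 0 (Set.Ioi 0)) (nhds (H y^2 + 2*(H y)*(fderiv ℝ H y (x - y)) + lam*‖x - y‖^2)) := by
        have hc : Continuous fun ε : ℝ =>
            H y^2 + 2*(H y)*(fderiv ℝ H y (x + ε • w - y)) + lam*‖x + ε • w - y‖^2 := by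
          apply Continuous.add
          apply Continuous.add continuous_const
          · exact continuous_const.mul ((fderiv ℝ H y).continuous.comp (hcurve.sub continuous_const))
          · exact continuous_const.mul (((hcurve.sub continuous_const).norm).pow 2)
        have h2' := (hc.tendsto 0).mono_left (nhdsWithin_le_nhds (s := Set.Ioi (0:ℝ)))
        simpa using h2'
      exact le_of_tendsto_of_tendsto hc2 hc1
        (eventually_nhdsWithin_of_forall (fun ε hε => hstep ε hε))
    · exact hgood y hy x hx
  -- final assembly
  obtain ⟨c₀, hc₀, hsc⟩ := scalar_key hlam hK hp
  refine ⟨c₀ / M ^ p, div_pos hc₀ (Real.rpow_pos_of_pos hM p), ?_⟩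
  intro x y hy
  have hgrad : ⟪gradient H y, x - y⟫_ℝ = fderiv ℝ H y (x - y) :=
    InnerProductSpace.toDual_symm_apply
  have hquad := hkeyquad y hy x
  have hS : |fderiv ℝ H y (x - y)| ≤ K * ‖x - y‖ := by
    calc |fderiv ℝ H y (x - y)| ≤ ‖fderiv ℝ H y‖ * ‖x - y‖ := by
          rw [← Real.norm_eq_abs]
          exact (fderiv ℝ H y).le_opNorm _
    _ ≤ K * ‖x - y‖ := mul_le_mul_of_nonneg_right (hKb y hy) (norm_nonneg _)
  have hmain := hsc (H x) (H y) (fderiv ℝ H y (x - y)) (‖x - y‖) (h0 x) (h0 y)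
    (norm_nonneg _) hS (by linarith)
  have hHM : H (x - y) ^ p ≤ M ^ p * ‖x - y‖ ^ p := by
    calc H (x - y) ^ p ≤ (M * ‖x - y‖) ^ p :=
          Real.rpow_le_rpow (h0 _) (hMb _) (by linarith)
    _ = M ^ p * ‖x - y‖ ^ p := Real.mul_rpow hM.le (norm_nonneg _)
  have hfinal : c₀ / M ^ p * H (x - y) ^ p ≤ c₀ * ‖x - y‖ ^ p := by
    have hMp : 0 < M ^ p := Real.rpow_pos_of_pos hM p
    have h3 : c₀ / M ^ p * H (x - y) ^ p ≤ c₀ / M ^ p * (M ^ p * ‖x - y‖ ^ p) :=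
      mul_le_mul_of_nonneg_left hHM (by positivity)
    have h4 : c₀ / M ^ p * (M ^ p * ‖x - y‖ ^ p) = c₀ * ‖x - y‖ ^ p := by
      field_simp
    linarith
  rw [hgrad]
  linarith
end
end

section
/- Let H : ℝ^N → ℝ (N ≥ 2) be a Finsler–Minkowski norm and let 2 ≤ p < ∞. Then there exists a constant c > 0 such that for every x, y ∈ ℝ^N \ {0}, ⟨H(x)^{p−1}·∇H(x) − H(y)^{p−1}·∇H(y), x − y⟩ ≥ c·H(x − y)^p, where ∇H denotes the gradient of H and ⟨·,·⟩ the Euclidean inner product on ℝ^N. -/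
open scoped InnerProductSpace

noncomputable section

section FMauxsection

open Set Metric

namespace FMaux


variable {N : ℕ} {H : EuclideanSpace ℝ (Fin N) → ℝ}



lemma aux_bounds (hN : 1 ≤ N) (H : EuclideanSpace ℝ (Fin N) → ℝ)
    (h0 : ∀ x, 0 ≤ H x) (h1 : ∀ x, H x = 0 ↔ x = 0)
    (h2 : ∀ (t : ℝ) (x : EuclideanSpace ℝ (Fin N)), H (t • x) = |t| * H x)
    (h3 : ContDiffOn ℝ (⊤ : ℕ∞) H {(0 : EuclideanSpace ℝ (Fin N))}ᶜ) :
    ∃ m M : ℝ, 0 < m ∧ 0 < M ∧ ∀ z, m * ‖z‖ ≤ H z ∧ H z ≤ M * ‖z‖ := by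
  haveI : Nontrivial (EuclideanSpace ℝ (Fin N)) := by
    refine ⟨EuclideanSpace.single (⟨0, by omega⟩ : Fin N) (1:ℝ), 0, ?_⟩
    intro h
    have := congrArg (fun f : EuclideanSpace ℝ (Fin N) => f ⟨0, by omega⟩) h
    simp [EuclideanSpace.single] at this
  have hSsub : sphere (0 : EuclideanSpace ℝ (Fin N)) 1 ⊆ {0}ᶜ := by
    intro z hz
    simp only [mem_sphere_iff_norm, sub_zero] at hz
    simp only [mem_compl_iff, mem_singleton_iff]
    intro h; rw [h] at hz; simp at hz
  have hcont : ContinuousOn H (sphere (0 : EuclideanSpace ℝ (Fin N)) 1) :=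
    h3.continuousOn.mono hSsub
  have hne : (sphere (0 : EuclideanSpace ℝ (Fin N)) 1).Nonempty :=
    NormedSpace.sphere_nonempty.mpr zero_le_one
  obtain ⟨u, huS, humin⟩ := (isCompact_sphere _ _).exists_isMinOn hne hcont
  obtain ⟨w, hwS, hwmax⟩ := (isCompact_sphere _ _).exists_isMaxOn hne hcont
  have hupos : 0 < H u := by
    rcases lt_or_eq_of_le (h0 u) with h | h
    · exact h
    · exfalso; exact hSsub huS ((h1 u).mp h.symm)
  refine ⟨H u, H w, hupos, lt_of_lt_of_le hupos (humin hwS), ?_⟩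
  intro z
  rcases eq_or_ne z 0 with rfl | hz
  · simp [(h1 0).mpr rfl]
  · have hnz : (0:ℝ) < ‖z‖ := norm_pos_iff.mpr hz
    set u' : EuclideanSpace ℝ (Fin N) := ‖z‖⁻¹ • z with hu'
    have hu'S : u' ∈ sphere (0 : EuclideanSpace ℝ (Fin N)) 1 := by
      simp [hu', norm_smul, abs_of_pos (inv_pos.mpr hnz), inv_mul_cancel₀ hnz.ne']
    have hzeq : H z = ‖z‖ * H u' := by
      rw [hu', h2, abs_of_pos (inv_pos.mpr hnz)]
      field_simp
    constructor
    · rw [hzeq, mul_comm (H u) ‖z‖]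
      exact mul_le_mul_of_nonneg_left (humin hu'S) hnz.le
    · rw [hzeq, mul_comm (H w) ‖z‖]
      exact mul_le_mul_of_nonneg_left (hwmax hu'S) hnz.le




def sm (t : ℝ) : EuclideanSpace ℝ (Fin N) →L[ℝ] EuclideanSpace ℝ (Fin N) :=
  t • ContinuousLinearMap.id ℝ (EuclideanSpace ℝ (Fin N))

lemma sm_apply (t : ℝ) (z : EuclideanSpace ℝ (Fin N)) : sm t z = t • z := rfl

lemma hasFDerivAt_sm (t : ℝ) (z : EuclideanSpace ℝ (Fin N)) :
    HasFDerivAt (fun w : EuclideanSpace ℝ (Fin N) => t • w) (sm t) z :=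
  (sm t).hasFDerivAt

lemma diffH (h3 : ContDiffOn ℝ (⊤ : ℕ∞) H {(0 : EuclideanSpace ℝ (Fin N))}ᶜ)
    {z : EuclideanSpace ℝ (Fin N)} (hz : z ≠ 0) : DifferentiableAt ℝ H z :=
  ((h3.contDiffAt (isOpen_compl_singleton.mem_nhds hz)).differentiableAt
    (by simp))

lemma g_smooth (h3 : ContDiffOn ℝ (⊤ : ℕ∞) H {(0 : EuclideanSpace ℝ (Fin N))}ᶜ) :
    ContDiffOn ℝ (⊤ : ℕ∞) (fun z => H z ^ 2 / 2) {(0 : EuclideanSpace ℝ (Fin N))}ᶜ :=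
  (h3.pow 2).div_const 2

lemma diffg (h3 : ContDiffOn ℝ (⊤ : ℕ∞) H {(0 : EuclideanSpace ℝ (Fin N))}ᶜ)
    {z : EuclideanSpace ℝ (Fin N)} (hz : z ≠ 0) :
    DifferentiableAt ℝ (fun z => H z ^ 2 / 2) z :=
  (((g_smooth h3).contDiffAt (isOpen_compl_singleton.mem_nhds hz)).differentiableAt
    (by simp))

lemma hasFDerivAt_g (h3 : ContDiffOn ℝ (⊤ : ℕ∞) H {(0 : EuclideanSpace ℝ (Fin N))}ᶜ)
    {z : EuclideanSpace ℝ (Fin N)} (hz : z ≠ 0) :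
    HasFDerivAt (fun z => H z ^ 2 / 2) (H z • fderiv ℝ H z) z := by
  have h : HasFDerivAt (fun z => (1/2 : ℝ) * (H z * H z))
      ((1/2 : ℝ) • (H z • fderiv ℝ H z + H z • fderiv ℝ H z)) z :=
    (((diffH h3 hz).hasFDerivAt).mul ((diffH h3 hz).hasFDerivAt)).const_mul (1/2)
  have hfun : (fun z => H z ^ 2 / 2) = fun z => (1/2 : ℝ) * (H z * H z) := by
    funext w; ring
  rw [hfun]
  convert h using 1
  ext v
  simp
  ring

lemma F_eq (h3 : ContDiffOn ℝ (⊤ : ℕ∞) H {(0 : EuclideanSpace ℝ (Fin N))}ᶜ)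
    {z : EuclideanSpace ℝ (Fin N)} (hz : z ≠ 0) :
    fderiv ℝ (fun z => H z ^ 2 / 2) z = H z • fderiv ℝ H z :=
  (hasFDerivAt_g h3 hz).fderiv

lemma hom1 (h2 : ∀ (t : ℝ) (x : EuclideanSpace ℝ (Fin N)), H (t • x) = |t| * H x)
    (h3 : ContDiffOn ℝ (⊤ : ℕ∞) H {(0 : EuclideanSpace ℝ (Fin N))}ᶜ)
    {t : ℝ} (ht : t ≠ 0) {z : EuclideanSpace ℝ (Fin N)} (hz : z ≠ 0) :
    fderiv ℝ (fun z => H z ^ 2 / 2) (t • z) = t • fderiv ℝ (fun z => H z ^ 2 / 2) z := by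
  set g : EuclideanSpace ℝ (Fin N) → ℝ := fun z => H z ^ 2 / 2 with hg
  have htz : t • z ≠ 0 := smul_ne_zero ht hz
  have key : (fun w : EuclideanSpace ℝ (Fin N) => g (t • w)) = fun w => t ^ 2 * g w := by
    funext w
    simp only [hg, h2 t w]
    rw [mul_pow, sq_abs]
    ring
  have hd1 : HasFDerivAt (fun w => g (t • w))
      ((fderiv ℝ g (t • z)).comp (sm t)) z :=
    ((diffg h3 htz).hasFDerivAt).comp z (hasFDerivAt_sm t z)
  have hd2 : HasFDerivAt (fun w => t ^ 2 * g w) ((t ^ 2) • fderiv ℝ g z) z :=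
    ((diffg h3 hz).hasFDerivAt).const_mul (t ^ 2)
  rw [key] at hd1
  have heq := hd1.unique hd2
  ext v
  have hv := congrArg (fun L : EuclideanSpace ℝ (Fin N) →L[ℝ] ℝ => L v) heq
  simp only [ContinuousLinearMap.coe_comp', Function.comp_apply,
    ContinuousLinearMap.coe_smul', Pi.smul_apply, sm_apply, smul_eq_mul] at hv
  rw [map_smul, smul_eq_mul] at hv
  simp only [ContinuousLinearMap.coe_smul', Pi.smul_apply, smul_eq_mul]
  apply mul_left_cancel₀ ht
  rw [hv]; ring

lemma F_smooth (h3 : ContDiffOn ℝ (⊤ : ℕ∞) H {(0 : EuclideanSpace ℝ (Fin N))}ᶜ) :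
    ContDiffOn ℝ (⊤ : ℕ∞) (fderiv ℝ (fun z => H z ^ 2 / 2))
      {(0 : EuclideanSpace ℝ (Fin N))}ᶜ :=
  (g_smooth h3).fderiv_of_isOpen isOpen_compl_singleton (by exact_mod_cast le_top)

lemma diffF (h3 : ContDiffOn ℝ (⊤ : ℕ∞) H {(0 : EuclideanSpace ℝ (Fin N))}ᶜ)
    {z : EuclideanSpace ℝ (Fin N)} (hz : z ≠ 0) :
    DifferentiableAt ℝ (fderiv ℝ (fun z => H z ^ 2 / 2)) z :=
  (((F_smooth h3).contDiffAt (isOpen_compl_singleton.mem_nhds hz)).differentiableAt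
    (by simp))

lemma hom2 (h2 : ∀ (t : ℝ) (x : EuclideanSpace ℝ (Fin N)), H (t • x) = |t| * H x)
    (h3 : ContDiffOn ℝ (⊤ : ℕ∞) H {(0 : EuclideanSpace ℝ (Fin N))}ᶜ)
    {t : ℝ} (ht : t ≠ 0) {z : EuclideanSpace ℝ (Fin N)} (hz : z ≠ 0) :
    fderiv ℝ (fderiv ℝ (fun z => H z ^ 2 / 2)) (t • z)
      = fderiv ℝ (fderiv ℝ (fun z => H z ^ 2 / 2)) z := by
  set F := fderiv ℝ (fun z : EuclideanSpace ℝ (Fin N) => H z ^ 2 / 2) with hF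
  have htz : t • z ≠ 0 := smul_ne_zero ht hz
  have hev : (fun w => F (t • w)) =ᶠ[nhds z] (fun w => t • F w) := by
    filter_upwards [isOpen_compl_singleton.mem_nhds hz] with w hw
    exact hom1 h2 h3 ht hw
  have hd1 : HasFDerivAt (fun w => F (t • w))
      ((fderiv ℝ F (t • z)).comp (sm t)) z :=
    ((diffF h3 htz).hasFDerivAt).comp z (hasFDerivAt_sm t z)
  have hd2 : HasFDerivAt (fun w => t • F w) (t • fderiv ℝ F z) z :=
    ((diffF h3 hz).hasFDerivAt).const_smul t
  have hd2' : HasFDerivAt (fun w => F (t • w)) (t • fderiv ℝ F z) z :=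
    hd2.congr_of_eventuallyEq hev
  have heq := hd1.unique hd2'
  ext v w
  have hvw := congrArg (fun L : EuclideanSpace ℝ (Fin N) →L[ℝ]
      (EuclideanSpace ℝ (Fin N) →L[ℝ] ℝ) => L v w) heq
  simp only [ContinuousLinearMap.coe_comp', Function.comp_apply, sm_apply,
    ContinuousLinearMap.coe_smul', Pi.smul_apply, smul_eq_mul] at hvw
  rw [map_smul] at hvw
  simp only [ContinuousLinearMap.coe_smul', Pi.smul_apply, smul_eq_mul] at hvw
  exact mul_left_cancel₀ ht hvw

lemma B_cont (h3 : ContDiffOn ℝ (⊤ : ℕ∞) H {(0 : EuclideanSpace ℝ (Fin N))}ᶜ) :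
    ContinuousOn (fderiv ℝ (fderiv ℝ (fun z => H z ^ 2 / 2)))
      {(0 : EuclideanSpace ℝ (Fin N))}ᶜ :=
  (F_smooth h3).continuousOn_fderiv_of_isOpen isOpen_compl_singleton
    (by exact_mod_cast le_top)

lemma sphere_sub_compl : sphere (0 : EuclideanSpace ℝ (Fin N)) 1 ⊆ {0}ᶜ := by
  intro z hz
  simp only [mem_sphere_iff_norm, sub_zero] at hz
  simp only [mem_compl_iff, mem_singleton_iff]
  intro h; rw [h] at hz; simp at hz

lemma nontriv (hN : 1 ≤ N) : Nontrivial (EuclideanSpace ℝ (Fin N)) := by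
  refine ⟨EuclideanSpace.single (⟨0, by omega⟩ : Fin N) (1:ℝ), 0, ?_⟩
  intro h
  have := congrArg (fun f : EuclideanSpace ℝ (Fin N) => f ⟨0, by omega⟩) h
  simp [EuclideanSpace.single] at this

lemma kappa_bound (hN : 1 ≤ N)
    (h2 : ∀ (t : ℝ) (x : EuclideanSpace ℝ (Fin N)), H (t • x) = |t| * H x)
    (h3 : ContDiffOn ℝ (⊤ : ℕ∞) H {(0 : EuclideanSpace ℝ (Fin N))}ᶜ)
    (h4 : ∀ x : EuclideanSpace ℝ (Fin N), x ≠ 0 →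
      ∀ v : EuclideanSpace ℝ (Fin N), v ≠ 0 →
        0 < fderiv ℝ (fderiv ℝ (fun z => H z ^ 2 / 2)) x v v) :
    ∃ κ > (0:ℝ), ∀ z : EuclideanSpace ℝ (Fin N), z ≠ 0 →
      ∀ v : EuclideanSpace ℝ (Fin N),
        κ * ‖v‖ ^ 2 ≤ fderiv ℝ (fderiv ℝ (fun z => H z ^ 2 / 2)) z v v := by
  haveI := nontriv hN
  set B := fderiv ℝ (fderiv ℝ (fun z : EuclideanSpace ℝ (Fin N) => H z ^ 2 / 2)) with hB
  set K := (sphere (0 : EuclideanSpace ℝ (Fin N)) 1) ×ˢ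
    (sphere (0 : EuclideanSpace ℝ (Fin N)) 1) with hK
  have hKc : IsCompact K := (isCompact_sphere _ _).prod (isCompact_sphere _ _)
  have hKne : K.Nonempty :=
    (NormedSpace.sphere_nonempty.mpr zero_le_one).prod
      (NormedSpace.sphere_nonempty.mpr zero_le_one)
  have hcont : ContinuousOn (fun q : EuclideanSpace ℝ (Fin N) × EuclideanSpace ℝ (Fin N)
      => B q.1 q.2 q.2) K := by
    have c1 : ContinuousOn (fun q : EuclideanSpace ℝ (Fin N) × EuclideanSpace ℝ (Fin N)
        => B q.1) K := by
      apply (B_cont h3).comp continuous_fst.continuousOn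
      intro q hq
      exact sphere_sub_compl hq.1
    exact (c1.clm_apply continuous_snd.continuousOn).clm_apply continuous_snd.continuousOn
  obtain ⟨⟨z₀, v₀⟩, hq₀, hmin⟩ := hKc.exists_isMinOn hKne hcont
  have hz₀ : z₀ ≠ 0 := fun h => absurd (hq₀.1) (by simp [h, mem_sphere_iff_norm])
  have hv₀ : v₀ ≠ 0 := fun h => absurd (hq₀.2) (by simp [h, mem_sphere_iff_norm])
  refine ⟨B z₀ v₀ v₀, h4 z₀ hz₀ v₀ hv₀, ?_⟩
  intro z hz v
  rcases eq_or_ne v 0 with rfl | hv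
  · simp
  · have hnz : (0:ℝ) < ‖z‖ := norm_pos_iff.mpr hz
    have hnv : (0:ℝ) < ‖v‖ := norm_pos_iff.mpr hv
    set u : EuclideanSpace ℝ (Fin N) := ‖z‖⁻¹ • z with hu
    set w : EuclideanSpace ℝ (Fin N) := ‖v‖⁻¹ • v with hw
    have huS : u ∈ sphere (0 : EuclideanSpace ℝ (Fin N)) 1 := by
      simp [hu, norm_smul, abs_of_pos (inv_pos.mpr hnz), inv_mul_cancel₀ hnz.ne']
    have hwS : w ∈ sphere (0 : EuclideanSpace ℝ (Fin N)) 1 := by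
      simp [hw, norm_smul, abs_of_pos (inv_pos.mpr hnv), inv_mul_cancel₀ hnv.ne']
    have hu0 : u ≠ 0 := sphere_sub_compl huS
    have hzu : z = ‖z‖ • u := by rw [hu, smul_inv_smul₀ hnz.ne']
    have hBz : B z = B u := by
      rw [hzu, hB]
      exact hom2 h2 h3 hnz.ne' hu0
    have hvw : v = ‖v‖ • w := by rw [hw, smul_inv_smul₀ hnv.ne']
    have hquad : B z v v = ‖v‖ ^ 2 * B u w w := by
      rw [hBz]
      have hsw : B u v v = B u (‖v‖ • w) (‖v‖ • w) := by rw [← hvw]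
      rw [hsw, map_smul]
      simp only [ContinuousLinearMap.coe_smul', Pi.smul_apply, map_smul, smul_eq_mul]
      ring
    rw [hquad]
    have := hmin (Set.mk_mem_prod huS hwS)
    calc B z₀ v₀ v₀ * ‖v‖ ^ 2 ≤ B u w w * ‖v‖ ^ 2 := by
          exact mul_le_mul_of_nonneg_right this (by positivity)
      _ = ‖v‖ ^ 2 * B u w w := by ring


lemma deriv_compare {Φ G φ γ : ℝ → ℝ} {a b : ℝ} (hab : a ≤ b)
    (hΦ : ∀ t ∈ Icc a b, HasDerivAt Φ (φ t) t)
    (hG : ∀ t ∈ Icc a b, HasDerivAt G (γ t) t)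
    (hle : ∀ t ∈ Ioo a b, γ t ≤ φ t) :
    G b - G a ≤ Φ b - Φ a := by
  set D : ℝ → ℝ := fun t => Φ t - G t with hD
  have hDd : ∀ t ∈ Icc a b, HasDerivAt D (φ t - γ t) t :=
    fun t ht => (hΦ t ht).sub (hG t ht)
  have hmono : MonotoneOn D (Icc a b) := by
    apply monotoneOn_of_deriv_nonneg (convex_Icc a b)
    · exact fun t ht => (hDd t ht).continuousAt.continuousWithinAt
    · intro t ht
      rw [interior_Icc] at ht
      exact ((hDd t (Ioo_subset_Icc_self ht)).differentiableAt).differentiableWithinAt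
    · intro t ht
      rw [interior_Icc] at ht
      rw [(hDd t (Ioo_subset_Icc_self ht)).deriv]
      linarith [hle t ht]
  have := hmono (left_mem_Icc.mpr hab) (right_mem_Icc.mpr hab) hab
  simp only [hD] at this
  linarith

lemma proj_bound {N : ℕ} (y h : EuclideanSpace ℝ (Fin N)) (hh : h ≠ 0) (t : ℝ) :
    ‖h‖ * |t - (-(inner ℝ y h : ℝ) / ‖h‖ ^ 2)| ≤ ‖y + t • h‖ := by
  set s : ℝ := -(inner ℝ y h : ℝ) / ‖h‖ ^ 2 with hs
  have hh0 : (0:ℝ) < ‖h‖ := norm_pos_iff.mpr hh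
  have hh2 : (0:ℝ) < ‖h‖ ^ 2 := by positivity
  have hth : ‖t • h‖ ^ 2 = t ^ 2 * ‖h‖ ^ 2 := by
    rw [norm_smul]; rw [mul_pow]; rw [Real.norm_eq_abs, sq_abs]
  have hexp : ‖y + t • h‖ ^ 2 = ‖y‖ ^ 2 + 2 * (t * (inner ℝ y h : ℝ)) + t ^ 2 * ‖h‖ ^ 2 := by
    rw [norm_add_sq_real, real_inner_smul_right, hth]
  have hcs : (inner ℝ y h : ℝ) * (inner ℝ y h : ℝ) ≤ ‖y‖ ^ 2 * ‖h‖ ^ 2 := by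
    have := real_inner_mul_inner_self_le y h
    rwa [real_inner_self_eq_norm_sq, real_inner_self_eq_norm_sq] at this
  have hsq : (‖h‖ * |t - s|) ^ 2 ≤ ‖y + t • h‖ ^ 2 := by
    rw [hexp, mul_pow, sq_abs]
    have hseq : s * ‖h‖ ^ 2 = -(inner ℝ y h : ℝ) := by
      rw [hs]; field_simp
    have hs2 : (s * ‖h‖ ^ 2) ^ 2 = (inner ℝ y h : ℝ) ^ 2 := by rw [hseq]; ring
    have key : s ^ 2 * ‖h‖ ^ 2 ≤ ‖y‖ ^ 2 := by
      have h5 : s ^ 2 * ‖h‖ ^ 2 * ‖h‖ ^ 2 ≤ ‖y‖ ^ 2 * ‖h‖ ^ 2 := by nlinarith [hcs, hs2]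
      exact le_of_mul_le_mul_right h5 hh2
    have h6 : t * (s * ‖h‖ ^ 2) = t * (-(inner ℝ y h : ℝ)) := by rw [hseq]
    nlinarith [key, h6]
  have h1 : (0:ℝ) ≤ ‖h‖ * |t - s| := by positivity
  nlinarith [norm_nonneg (y + t • h), hsq, h1]




lemma euler (h2 : ∀ (t : ℝ) (x : EuclideanSpace ℝ (Fin N)), H (t • x) = |t| * H x)
    (h3 : ContDiffOn ℝ (⊤ : ℕ∞) H {(0 : EuclideanSpace ℝ (Fin N))}ᶜ)
    {z : EuclideanSpace ℝ (Fin N)} (hz : z ≠ 0) :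
    fderiv ℝ H z z = H z := by
  have hc : HasDerivAt (fun t : ℝ => t • z) z 1 := by
    have := (hasDerivAt_id (1:ℝ)).smul_const z
    simpa using this
  have hz1 : ((1:ℝ) • z) ≠ 0 := by simpa using hz
  have hd1 : HasDerivAt (fun t : ℝ => H (t • z)) (fderiv ℝ H z z) 1 := by
    have h := ((diffH h3 hz1).hasFDerivAt).comp_hasDerivAt 1 hc
    rw [one_smul] at h
    exact h
  have hev : (fun t : ℝ => t * H z) =ᶠ[nhds 1] (fun t : ℝ => H (t • z)) := by
    filter_upwards [eventually_gt_nhds zero_lt_one] with t ht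
    rw [h2, abs_of_pos ht]
  have hd2 : HasDerivAt (fun t : ℝ => H (t • z)) (H z) 1 :=
    (hasDerivAt_mul_const (H z)).congr_of_eventuallyEq hev.symm
  exact hd1.unique hd2

lemma DH_neg (h2 : ∀ (t : ℝ) (x : EuclideanSpace ℝ (Fin N)), H (t • x) = |t| * H x)
    (h3 : ContDiffOn ℝ (⊤ : ℕ∞) H {(0 : EuclideanSpace ℝ (Fin N))}ᶜ)
    {s : ℝ} (hs : 0 < s) {y : EuclideanSpace ℝ (Fin N)} (hy : y ≠ 0)
    (v : EuclideanSpace ℝ (Fin N)) :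
    fderiv ℝ H ((-s) • y) v = - fderiv ℝ H y v := by
  have hsy : (-s) • y ≠ 0 := smul_ne_zero (by linarith) hy
  have key : (fun w : EuclideanSpace ℝ (Fin N) => H ((-s) • w)) = fun w => s * H w := by
    funext w
    rw [h2, abs_neg, abs_of_pos hs]
  have hd1 : HasFDerivAt (fun w : EuclideanSpace ℝ (Fin N) => H ((-s) • w))
      ((fderiv ℝ H ((-s) • y)).comp (sm (-s))) y :=
    ((diffH h3 hsy).hasFDerivAt).comp y (hasFDerivAt_sm (-s) y)
  have hd2 : HasFDerivAt (fun w : EuclideanSpace ℝ (Fin N) => s * H w)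
      (s • fderiv ℝ H y) y := ((diffH h3 hy).hasFDerivAt).const_mul s
  rw [key] at hd1
  have heq := hd1.unique hd2
  have hv := congrArg (fun L : EuclideanSpace ℝ (Fin N) →L[ℝ] ℝ => L v) heq
  simp only [ContinuousLinearMap.coe_comp', Function.comp_apply,
    ContinuousLinearMap.coe_smul', Pi.smul_apply, smul_eq_mul] at hv
  have hsm : (sm (-s) : EuclideanSpace ℝ (Fin N) →L[ℝ] EuclideanSpace ℝ (Fin N)) v
      = (-s) • v := rfl
  rw [hsm, map_smul, smul_eq_mul] at hv
  have hs0 : s ≠ 0 := hs.ne'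
  field_simp at hv
  rw [neg_smul]
  apply mul_left_cancel₀ hs0
  rw [mul_neg]
  rw [neg_smul] at hv
  rw [← hv]; ring



lemma two_rpow_ineq {q s : ℝ} (hq : 1 ≤ q) (hs : 0 ≤ s) :
    2 / 2 ^ q * (1 + s) ^ q ≤ 1 + s ^ q := by
  have hcx := (convexOn_rpow hq).2 (Set.mem_Ici.mpr (zero_le_one (α := ℝ)))
    (Set.mem_Ici.mpr hs) (by norm_num : (0:ℝ) ≤ 1/2) (by norm_num : (0:ℝ) ≤ 1/2)
    (by norm_num)
  simp only [smul_eq_mul, Real.one_rpow] at hcx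
  have hbase : (1/2 : ℝ) * 1 + (1/2 : ℝ) * s = (1 + s) / 2 := by ring
  rw [hbase] at hcx
  have hdiv : ((1 + s) / 2 : ℝ) ^ q = (1 + s) ^ q / 2 ^ q :=
    Real.div_rpow (by linarith) (by norm_num) q
  rw [hdiv] at hcx
  have h2q : (0:ℝ) < 2 ^ q := Real.rpow_pos_of_pos (by norm_num) q
  rw [div_mul_eq_mul_div, div_le_iff₀ h2q] at *
  nlinarith [hcx, h2q]

end FMaux

end FMauxsection

set_option maxHeartbeats 2000000 in
open Set in
theorem finsler_monotonicity_inequality {N : ℕ} (hN : 2 ≤ N)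
    (H : EuclideanSpace ℝ (Fin N) → ℝ) (hH : IsFinslerMinkowskiNorm H)
    (p : ℝ) (hp : 2 ≤ p) :
    ∃ c > (0 : ℝ), ∀ x : EuclideanSpace ℝ (Fin N), x ≠ 0 →
      ∀ y : EuclideanSpace ℝ (Fin N), y ≠ 0 →
        c * H (x - y) ^ p
          ≤ ⟪(H x ^ (p - 1)) • gradient H x - (H y ^ (p - 1)) • gradient H y, x - y⟫_ℝ := by
  classical
  obtain ⟨h0, h1, h2, h3, h4⟩ := hH
  obtain ⟨m, M, hm, hM, hmM⟩ := FMaux.aux_bounds (by omega) H h0 h1 h2 h3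
  obtain ⟨κ, hκ, hκB⟩ := FMaux.kappa_bound (by omega) h2 h3 h4
  have hp1 : (0:ℝ) < p - 1 := by linarith
  have hp1' : (1:ℝ) ≤ p - 1 := by linarith
  have hp2 : (0:ℝ) ≤ p - 2 := by linarith
  have hppos : (0:ℝ) < p := by linarith
  have hMp : (0:ℝ) < M ^ p := Real.rpow_pos_of_pos hM p
  set c₁ : ℝ := κ * m ^ (p-2) * (1/2 : ℝ) ^ (p-1) / ((p-1) * M ^ p) with hc₁def
  set c₂ : ℝ := 2 / 2 ^ (p-1) with hc₂def
  have hc₁pos : 0 < c₁ := by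
    apply div_pos
    · exact mul_pos (mul_pos hκ (Real.rpow_pos_of_pos hm _))
        (Real.rpow_pos_of_pos (by norm_num) _)
    · exact mul_pos hp1 hMp
  have hc₂pos : 0 < c₂ := div_pos (by norm_num) (Real.rpow_pos_of_pos (by norm_num) _)
  have hHpos : ∀ z : EuclideanSpace ℝ (Fin N), z ≠ 0 → 0 < H z := fun z hz =>
    lt_of_le_of_ne (h0 z) (fun h => hz ((h1 z).mp h.symm))
  have hbridge : ∀ z v : EuclideanSpace ℝ (Fin N),
      ⟪gradient H z, v⟫_ℝ = fderiv ℝ H z v := by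
    intro z v
    simp only [gradient]
    exact InnerProductSpace.toDual_symm_apply
  refine ⟨min c₁ c₂, lt_min hc₁pos hc₂pos, ?_⟩
  intro x hx y hy
  have hHx := hHpos x hx
  have hHy := hHpos y hy
  rcases eq_or_ne x y with rfl | hxy
  · rw [sub_self, (h1 0).mpr rfl, Real.zero_rpow hppos.ne']
    simp
  rw [inner_sub_left, real_inner_smul_left, real_inner_smul_left, hbridge, hbridge]
  by_cases hcol : ∃ s : ℝ, 0 < s ∧ x = (-s) • y
  · -- collinear opposite case
    obtain ⟨s, hs, rfl⟩ := hcol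
    have h1s : (0:ℝ) < 1 + s := by linarith
    have hHxv : H ((-s) • y) = s * H y := by rw [h2, abs_neg, abs_of_pos hs]
    have hsub : (-s) • y - y = (-(1+s)) • y := by
      rw [neg_smul, neg_smul, add_smul, one_smul]
      abel
    have hDx := FMaux.DH_neg h2 h3 hs hy
    have hEuler : fderiv ℝ H y y = H y := FMaux.euler h2 h3 hy
    have hv1 : fderiv ℝ H y ((-(1+s)) • y) = -(1+s) * H y := by
      rw [map_smul, hEuler, smul_eq_mul]
    have A1 : fderiv ℝ H ((-s) • y) ((-s) • y - y) = (1+s) * H y := by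
      rw [hsub, hDx, hv1]; ring
    have A2 : fderiv ℝ H y ((-s) • y - y) = -(1+s) * H y := by
      rw [hsub, hv1]
    have A3 : H ((-s) • y) ^ (p-1) = s ^ (p-1) * H y ^ (p-1) := by
      rw [hHxv, Real.mul_rpow hs.le (h0 y)]
    have A4 : H ((-s) • y - y) ^ p = (1+s) ^ p * H y ^ p := by
      rw [hsub, h2, abs_neg, abs_of_pos h1s, Real.mul_rpow h1s.le (h0 y)]
    have A5 : H y ^ (p-1) * H y = H y ^ p := by
      have := Real.rpow_add hHy (p-1) 1
      rw [Real.rpow_one] at this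
      have e2 : p - 1 + 1 = p := by ring
      rw [e2] at this
      exact this.symm
    have A6 : (1+s) ^ p = (1+s) ^ (p-1) * (1+s) := by
      have := Real.rpow_add h1s (p-1) 1
      rw [Real.rpow_one] at this
      have e2 : p - 1 + 1 = p := by ring
      rw [e2] at this
      exact this
    have A7 : c₂ * (1+s) ^ (p-1) ≤ 1 + s ^ (p-1) := by
      rw [hc₂def]
      exact FMaux.two_rpow_ineq hp1' hs.le
    rw [A1, A2, A3, A4]
    have hyppos : (0:ℝ) < H y ^ p := Real.rpow_pos_of_pos hHy p
    have hyp1pos : (0:ℝ) < H y ^ (p-1) := Real.rpow_pos_of_pos hHy (p-1)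
    have hs1pos : (0:ℝ) ≤ s ^ (p-1) := Real.rpow_nonneg hs.le (p-1)
    calc min c₁ c₂ * ((1+s) ^ p * H y ^ p)
        ≤ c₂ * ((1+s) ^ p * H y ^ p) := by
          apply mul_le_mul_of_nonneg_right (min_le_right _ _)
          exact mul_nonneg (Real.rpow_nonneg h1s.le p) hyppos.le
      _ = (c₂ * (1+s) ^ (p-1)) * ((1+s) * H y ^ p) := by rw [A6]; ring
      _ ≤ (1 + s ^ (p-1)) * ((1+s) * H y ^ p) := by
          apply mul_le_mul_of_nonneg_right A7
          exact mul_nonneg h1s.le hyppos.le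
      _ = s ^ (p-1) * H y ^ (p-1) * ((1+s) * H y) - H y ^ (p-1) * (-(1+s) * H y) := by
          rw [← A5]; ring
  · -- segment avoids the origin
    push_neg at hcol
    set h : EuclideanSpace ℝ (Fin N) := x - y with hhdef
    have hh0 : h ≠ 0 := sub_ne_zero.mpr hxy
    have hhn : (0:ℝ) < ‖h‖ := norm_pos_iff.mpr hh0
    have hseg : ∀ t ∈ Icc (0:ℝ) 1, y + t • h ≠ 0 := by
      intro t ht hzero
      rcases eq_or_ne t 0 with rfl | ht0
      · simp only [zero_smul, add_zero] at hzero
        exact hy hzero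
      have htpos : 0 < t := lt_of_le_of_ne ht.1 (Ne.symm ht0)
      have hx' : x = (t⁻¹ * (t-1)) • y := by
        have h2' : t • x = (t-1) • y := by
          have e1 : y + t • (x - y) = 0 := by rw [← hhdef]; exact hzero
          rw [smul_sub] at e1
          have e3 : t • x = t • y - y := by
            calc t • x = (y + (t • x - t • y)) + (t • y - y) := by abel
              _ = 0 + (t • y - y) := by rw [e1]
              _ = t • y - y := by rw [zero_add]
          rw [e3, sub_smul, one_smul]
        rw [mul_smul, ← h2', smul_smul, inv_mul_cancel₀ ht0, one_smul]
      rcases eq_or_lt_of_le ht.2 with rfl | ht1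
      · simp only [sub_self, mul_zero, zero_smul] at hx'
        exact hx hx'
      · refine hcol ((1-t)/t) (div_pos (by linarith) htpos) ?_
        rw [hx']
        congr 1
        field_simp
        ring
    set F := fderiv ℝ (fun z : EuclideanSpace ℝ (Fin N) => H z ^ 2 / 2) with hFdef
    set ts : ℝ := -(inner ℝ y h : ℝ) / ‖h‖ ^ 2 with htsdef
    set C : ℝ := κ * m ^ (p-2) * ‖h‖ ^ p with hCdef
    have hCpos : 0 < C :=
      mul_pos (mul_pos hκ (Real.rpow_pos_of_pos hm _)) (Real.rpow_pos_of_pos hhn _)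
    set Φ : ℝ → ℝ := fun t => (H (y + t • h)) ^ (p-2) * (F (y + t • h) h) with hΦdef
    set φ : ℝ → ℝ := fun t =>
      (fderiv ℝ H (y + t • h) h * (p-2) * (H (y + t • h)) ^ (p-2-1)) * (F (y + t • h) h)
      + (H (y + t • h)) ^ (p-2) * (fderiv ℝ F (y + t • h) h h) with hφdef
    have hΦd : ∀ t ∈ Icc (0:ℝ) 1, HasDerivAt Φ (φ t) t := by
      intro t ht
      have hz := hseg t ht
      have hc' : HasDerivAt (fun t : ℝ => y + t • h) h t := by
        simpa using ((hasDerivAt_id t).smul_const h).const_add y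
      have hu' : HasDerivAt (fun t : ℝ => H (y + t • h)) (fderiv ℝ H (y + t • h) h) t :=
        (FMaux.diffH h3 hz).hasFDerivAt.comp_hasDerivAt t hc'
      have ha' : HasDerivAt (fun t : ℝ => (H (y + t • h)) ^ (p-2))
          (fderiv ℝ H (y + t • h) h * (p-2) * (H (y + t • h)) ^ (p-2-1)) t :=
        hu'.rpow_const (Or.inl (hHpos _ hz).ne')
      have hb' : HasDerivAt (fun t : ℝ => F (y + t • h)) (fderiv ℝ F (y + t • h) h) t :=
        (FMaux.diffF h3 hz).hasFDerivAt.comp_hasDerivAt t hc'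
      have hbh : HasDerivAt (fun t : ℝ => F (y + t • h) h)
          (fderiv ℝ F (y + t • h) h h) t := by
        have := hb'.clm_apply (hasDerivAt_const t h)
        simpa using this
      exact ha'.mul hbh
    have hφlow : ∀ t ∈ Icc (0:ℝ) 1, C * |t - ts| ^ (p-2) ≤ φ t := by
      intro t ht
      have hz := hseg t ht
      have hHz := hHpos _ hz
      have hFzh : F (y + t • h) h = H (y + t • h) * fderiv ℝ H (y + t • h) h := by
        rw [hFdef, FMaux.F_eq h3 hz]
        simp
      have hterm1 : 0 ≤ (fderiv ℝ H (y + t • h) h * (p-2) * (H (y + t • h)) ^ (p-2-1))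
          * (F (y + t • h) h) := by
        rw [hFzh]
        have e : (fderiv ℝ H (y + t • h) h * (p-2) * (H (y + t • h)) ^ (p-2-1))
            * (H (y + t • h) * fderiv ℝ H (y + t • h) h)
            = (p-2) * ((H (y + t • h)) ^ (p-2-1) * H (y + t • h))
              * (fderiv ℝ H (y + t • h) h) ^ 2 := by ring
        rw [e]
        apply mul_nonneg (mul_nonneg hp2 _) (sq_nonneg _)
        exact mul_nonneg (Real.rpow_nonneg hHz.le _) hHz.le
      have hterm2 : C * |t - ts| ^ (p-2)
          ≤ (H (y + t • h)) ^ (p-2) * (fderiv ℝ F (y + t • h) h h) := by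
        have hBzh : κ * ‖h‖ ^ 2 ≤ fderiv ℝ F (y + t • h) h h := by
          rw [hFdef]
          exact hκB _ hz h
        have hproj := FMaux.proj_bound y h hh0 t
        rw [← htsdef] at hproj
        have hchain : m * (‖h‖ * |t - ts|) ≤ H (y + t • h) := by
          calc m * (‖h‖ * |t - ts|) ≤ m * ‖y + t • h‖ :=
                mul_le_mul_of_nonneg_left hproj hm.le
            _ ≤ H (y + t • h) := (hmM _).1
        have hrw : (m * (‖h‖ * |t - ts|)) ^ (p-2) ≤ (H (y + t • h)) ^ (p-2) :=
          Real.rpow_le_rpow (by positivity) hchain hp2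
        have hexpand : (m * (‖h‖ * |t - ts|)) ^ (p-2)
            = m ^ (p-2) * (‖h‖ ^ (p-2) * |t - ts| ^ (p-2)) := by
          rw [Real.mul_rpow hm.le (by positivity),
            Real.mul_rpow (norm_nonneg h) (abs_nonneg _)]
        have hCsplit : C * |t - ts| ^ (p-2)
            = (m ^ (p-2) * (‖h‖ ^ (p-2) * |t - ts| ^ (p-2))) * (κ * ‖h‖ ^ 2) := by
          rw [hCdef]
          have e : ‖h‖ ^ p = ‖h‖ ^ (p-2) * ‖h‖ ^ (2:ℕ) := by
            rw [← Real.rpow_natCast ‖h‖ 2, ← Real.rpow_add hhn]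
            norm_num
          rw [e]
          push_cast
          ring
        rw [hCsplit]
        calc (m ^ (p-2) * (‖h‖ ^ (p-2) * |t - ts| ^ (p-2))) * (κ * ‖h‖ ^ 2)
            ≤ (H (y + t • h)) ^ (p-2) * (κ * ‖h‖ ^ 2) := by
              apply mul_le_mul_of_nonneg_right _ (by positivity)
              rw [← hexpand]; exact hrw
          _ ≤ (H (y + t • h)) ^ (p-2) * (fderiv ℝ F (y + t • h) h h) := by
              apply mul_le_mul_of_nonneg_left hBzh (Real.rpow_nonneg hHz.le _)
      calc C * |t - ts| ^ (p-2)
          ≤ (H (y + t • h)) ^ (p-2) * (fderiv ℝ F (y + t • h) h h) := hterm2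
        _ ≤ φ t := by
            rw [hφdef]
            simp only
            linarith [hterm1]
    have hφ0 : ∀ t ∈ Icc (0:ℝ) 1, (0:ℝ) ≤ φ t := by
      intro t ht
      have := hφlow t ht
      have hnn : (0:ℝ) ≤ C * |t - ts| ^ (p-2) :=
        mul_nonneg hCpos.le (Real.rpow_nonneg (abs_nonneg _) _)
      linarith
    have hmain : C / (p-1) * (1/2 : ℝ) ^ (p-1) ≤ Φ 1 - Φ 0 := by
      rcases le_or_gt ts (1/2) with hts | hts
      · -- minimum on the left half: integrate on [1/2, 1]
        have hA : (0:ℝ) - 0 ≤ Φ (1/2) - Φ 0 :=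
          FMaux.deriv_compare (by norm_num : (0:ℝ) ≤ 1/2)
            (fun t ht => hΦd t ⟨ht.1, by linarith [ht.2]⟩)
            (fun t _ => hasDerivAt_const t (0:ℝ))
            (fun t ht => hφ0 t ⟨ht.1.le, by linarith [ht.2]⟩)
        have hG : ∀ t ∈ Icc (1/2:ℝ) 1, HasDerivAt (fun t : ℝ => C/(p-1) * (t - 1/2) ^ (p-1))
            (C/(p-1) * (1 * (p-1) * (t - 1/2) ^ (p-1-1))) t := by
          intro t _
          exact HasDerivAt.const_mul (C/(p-1))
            (((hasDerivAt_id t).sub_const (1/2)).rpow_const (Or.inr hp1'))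
        have hcomp : ∀ t ∈ Ioo (1/2:ℝ) 1,
            C/(p-1) * (1 * (p-1) * (t - 1/2) ^ (p-1-1)) ≤ φ t := by
          intro t ht
          have hval : C/(p-1) * (1 * (p-1) * (t - 1/2) ^ (p-1-1))
              = C * (t - 1/2) ^ (p-2) := by
            have e : p - 1 - 1 = p - 2 := by ring
            rw [e]
            field_simp
          rw [hval]
          have hle : (t - 1/2) ^ (p-2) ≤ |t - ts| ^ (p-2) := by
            apply Real.rpow_le_rpow (by linarith [ht.1]) _ hp2
            have e1 : t - 1/2 ≤ t - ts := by linarith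
            exact le_trans e1 (le_abs_self _)
          calc C * (t - 1/2) ^ (p-2) ≤ C * |t - ts| ^ (p-2) :=
                mul_le_mul_of_nonneg_left hle hCpos.le
            _ ≤ φ t := hφlow t ⟨by linarith [ht.1], ht.2.le⟩
        have hB2 : C/(p-1) * ((1:ℝ) - 1/2) ^ (p-1) - C/(p-1) * ((1/2:ℝ) - 1/2) ^ (p-1)
            ≤ Φ 1 - Φ (1/2) :=
          FMaux.deriv_compare (by norm_num : (1/2:ℝ) ≤ 1)
            (fun t ht => hΦd t ⟨by linarith [ht.1], ht.2⟩) hG hcomp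
        have e1 : ((1:ℝ) - 1/2) = 1/2 := by norm_num
        have e2 : ((1/2:ℝ) - 1/2) = 0 := by norm_num
        rw [e1, e2, Real.zero_rpow hp1.ne', mul_zero, sub_zero] at hB2
        linarith
      · -- minimum on the right half: integrate on [0, 1/2]
        have hA : (0:ℝ) - 0 ≤ Φ 1 - Φ (1/2) :=
          FMaux.deriv_compare (by norm_num : (1/2:ℝ) ≤ 1)
            (fun t ht => hΦd t ⟨by linarith [ht.1], ht.2⟩)
            (fun t _ => hasDerivAt_const t (0:ℝ))
            (fun t ht => hφ0 t ⟨by linarith [ht.1], ht.2.le⟩)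
        have hG : ∀ t ∈ Icc (0:ℝ) (1/2), HasDerivAt
            (fun t : ℝ => -(C/(p-1)) * (1/2 - t) ^ (p-1))
            (-(C/(p-1)) * ((-1) * (p-1) * (1/2 - t) ^ (p-1-1))) t := by
          intro t _
          exact HasDerivAt.const_mul (-(C/(p-1)))
            (((hasDerivAt_id t).const_sub (1/2)).rpow_const (Or.inr hp1'))
        have hcomp : ∀ t ∈ Ioo (0:ℝ) (1/2),
            -(C/(p-1)) * ((-1) * (p-1) * (1/2 - t) ^ (p-1-1)) ≤ φ t := by
          intro t ht
          have hval : -(C/(p-1)) * ((-1) * (p-1) * (1/2 - t) ^ (p-1-1))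
              = C * (1/2 - t) ^ (p-2) := by
            have e : p - 1 - 1 = p - 2 := by ring
            rw [e]
            field_simp
          rw [hval]
          have hle : (1/2 - t) ^ (p-2) ≤ |t - ts| ^ (p-2) := by
            apply Real.rpow_le_rpow (by linarith [ht.2]) _ hp2
            have e1 : 1/2 - t ≤ ts - t := by linarith
            have e2 : ts - t ≤ |t - ts| := by
              rw [abs_sub_comm]
              exact le_abs_self _
            linarith
          calc C * (1/2 - t) ^ (p-2) ≤ C * |t - ts| ^ (p-2) :=
                mul_le_mul_of_nonneg_left hle hCpos.le
            _ ≤ φ t := hφlow t ⟨ht.1.le, by linarith [ht.2]⟩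
        have hB2 : -(C/(p-1)) * ((1/2:ℝ) - 1/2) ^ (p-1) - -(C/(p-1)) * ((1/2:ℝ) - 0) ^ (p-1)
            ≤ Φ (1/2) - Φ 0 :=
          FMaux.deriv_compare (by norm_num : (0:ℝ) ≤ 1/2)
            (fun t ht => hΦd t ⟨ht.1, by linarith [ht.2]⟩) hG hcomp
        have e1 : ((1/2:ℝ) - 1/2) = 0 := by norm_num
        have e2 : ((1/2:ℝ) - 0) = 1/2 := by norm_num
        rw [e1, e2, Real.zero_rpow hp1.ne', mul_zero] at hB2
        linarith
    have hΦ1 : Φ 1 = H x ^ (p-1) * fderiv ℝ H x h := by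
      rw [hΦdef]
      simp only
      have e : y + (1:ℝ) • h = x := by
        rw [one_smul, hhdef, add_sub_cancel]
      rw [e, hFdef, FMaux.F_eq h3 hx]
      simp only [ContinuousLinearMap.coe_smul', Pi.smul_apply, smul_eq_mul]
      have e2 : H x ^ (p-2) * H x = H x ^ (p-1) := by
        have := Real.rpow_add hHx (p-2) 1
        rw [Real.rpow_one] at this
        have e3 : p - 2 + 1 = p - 1 := by ring
        rw [e3] at this
        exact this.symm
      rw [← e2]
      ring
    have hΦ0 : Φ 0 = H y ^ (p-1) * fderiv ℝ H y h := by
      rw [hΦdef]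
      simp only
      have e : y + (0:ℝ) • h = y := by rw [zero_smul, add_zero]
      rw [e, hFdef, FMaux.F_eq h3 hy]
      simp only [ContinuousLinearMap.coe_smul', Pi.smul_apply, smul_eq_mul]
      have e2 : H y ^ (p-2) * H y = H y ^ (p-1) := by
        have := Real.rpow_add hHy (p-2) 1
        rw [Real.rpow_one] at this
        have e3 : p - 2 + 1 = p - 1 := by ring
        rw [e3] at this
        exact this.symm
      rw [← e2]
      ring
    have hHh : H h ^ p ≤ M ^ p * ‖h‖ ^ p := by
      calc H h ^ p ≤ (M * ‖h‖) ^ p :=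
            Real.rpow_le_rpow (h0 h) (hmM h).2 hppos.le
        _ = M ^ p * ‖h‖ ^ p := Real.mul_rpow hM.le (norm_nonneg h)
    have heq : c₁ * (M ^ p * ‖h‖ ^ p) = C / (p-1) * (1/2 : ℝ) ^ (p-1) := by
      rw [hc₁def, hCdef]
      field_simp
    calc min c₁ c₂ * H h ^ p ≤ c₁ * H h ^ p := by
          apply mul_le_mul_of_nonneg_right (min_le_left _ _)
          exact Real.rpow_nonneg (h0 h) p
      _ ≤ c₁ * (M ^ p * ‖h‖ ^ p) := mul_le_mul_of_nonneg_left hHh hc₁pos.le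
      _ = C / (p-1) * (1/2 : ℝ) ^ (p-1) := heq
      _ ≤ Φ 1 - Φ 0 := hmain
      _ = H x ^ (p-1) * fderiv ℝ H x h - H y ^ (p-1) * fderiv ℝ H y h := by
          rw [hΦ1, hΦ0]
end
end

section
/- Let H : ℝ^N → ℝ (N ≥ 2) be a Finsler–Minkowski norm. In particular, as a consequence of strict monotonicity, for every x, y ∈ ℝ^N \ {0} with x ≠ y and every 2 ≤ p < ∞, one has ⟨H(x)^{p−1}·∇H(x) − H(y)^{p−1}·∇H(y), x − y⟩ > 0, where ∇H denotes the gradient of H and ⟨·,·⟩ the Euclidean inner product on ℝ^N. -/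
open scoped InnerProductSpace

noncomputable section

variable {N : ℕ} {H : EuclideanSpace ℝ (Fin N) → ℝ}

theorem FM.diffAt (hH : IsFinslerMinkowskiNorm H) {x : EuclideanSpace ℝ (Fin N)} (hx : x ≠ 0) :
    DifferentiableAt ℝ H x :=
  (hH.2.2.2.1.contDiffAt (isOpen_compl_singleton.mem_nhds hx)).differentiableAt (by simp)

theorem FM.pos (hH : IsFinslerMinkowskiNorm H) {x : EuclideanSpace ℝ (Fin N)} (hx : x ≠ 0) :
    0 < H x :=
  lt_of_le_of_ne (hH.1 x) (fun h => hx ((hH.2.1 x).mp h.symm))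

theorem FM.euler (hH : IsFinslerMinkowskiNorm H) {x : EuclideanSpace ℝ (Fin N)} (hx : x ≠ 0) :
    fderiv ℝ H x x = H x := by
  have hd := FM.diffAt hH hx
  have hline : HasDerivAt (fun t : ℝ => t • x) x 1 := by
    simpa using (hasDerivAt_id (1:ℝ)).smul_const x
  have h1 : HasDerivAt (fun t : ℝ => H (t • x)) (fderiv ℝ H x x) 1 := by
    have hfd : HasFDerivAt H (fderiv ℝ H x) ((1:ℝ) • x) := by
      simpa using hd.hasFDerivAt
    exact hfd.comp_hasDerivAt 1 hline
  have h2 : HasDerivAt (fun t : ℝ => t * H x) (H x) 1 := by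
    simpa using (hasDerivAt_id (1:ℝ)).mul_const (H x)
  have heq : (fun t : ℝ => H (t • x)) =ᶠ[nhds 1] fun t => t * H x := by
    filter_upwards [eventually_gt_nhds (by norm_num : (0:ℝ) < 1)] with t ht
    rw [hH.2.2.1 t x, abs_of_pos ht]
  have h3 : HasDerivAt (fun t : ℝ => t * H x) (fderiv ℝ H x x) 1 :=
    h1.congr_of_eventuallyEq heq.symm
  exact h3.unique h2

theorem FM.fderiv_sq (hH : IsFinslerMinkowskiNorm H) {x : EuclideanSpace ℝ (Fin N)} (hx : x ≠ 0) :
    HasFDerivAt (fun z => H z ^ 2 / 2) (H x • fderiv ℝ H x) x := by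
  have hd := FM.diffAt hH hx
  have hg : HasDerivAt (fun t : ℝ => t ^ 2 / 2) (H x) (H x) := by
    simpa using (hasDerivAt_pow 2 (H x)).div_const 2
  exact hg.comp_hasFDerivAt x hd.hasFDerivAt

theorem FM.strict_seg (hH : IsFinslerMinkowskiNorm H) {a b : EuclideanSpace ℝ (Fin N)}
    (hab : a ≠ b) (hseg : ∀ t : ℝ, t ∈ Set.Icc (0:ℝ) 1 → a + t • (b - a) ≠ 0) :
    fderiv ℝ (fun z => H z ^ 2 / 2) a (b - a) < H b ^ 2 / 2 - H a ^ 2 / 2 := by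
  set f : EuclideanSpace ℝ (Fin N) → ℝ := fun z => H z ^ 2 / 2 with hf
  have hv : b - a ≠ 0 := sub_ne_zero.mpr (Ne.symm hab)
  set γ : ℝ → EuclideanSpace ℝ (Fin N) := fun t => a + t • (b - a) with hγdef
  set φ : ℝ → ℝ := fun t => fderiv ℝ f (γ t) (b - a) with hφdef
  have hfC : ContDiffOn ℝ (⊤ : ℕ∞) f {(0 : EuclideanSpace ℝ (Fin N))}ᶜ :=
    (hH.2.2.2.1.pow 2).div_const 2
  have hfCat : ∀ t : ℝ, t ∈ Set.Icc (0:ℝ) 1 → ContDiffAt ℝ (⊤ : ℕ∞) f (γ t) := fun t ht =>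
    hfC.contDiffAt (isOpen_compl_singleton.mem_nhds (hseg t ht))
  have hγ : ∀ t : ℝ, HasDerivAt γ (b - a) t := fun t => by
    have := ((hasDerivAt_id t).smul_const (b - a)).const_add a
    simp only [id, one_smul] at this
    exact this
  -- derivative of φ
  have hφ : ∀ t ∈ Set.Icc (0:ℝ) 1,
      HasDerivAt φ (fderiv ℝ (fderiv ℝ f) (γ t) (b - a) (b - a)) t := by
    intro t ht
    have h2 : ContDiffAt ℝ 1 (fderiv ℝ f) (γ t) :=
      (hfCat t ht).fderiv_right (by norm_cast)
    have hd2 : HasFDerivAt (fderiv ℝ f) (fderiv ℝ (fderiv ℝ f) (γ t)) (γ t) :=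
      (h2.differentiableAt one_ne_zero).hasFDerivAt
    have hcomp : HasDerivAt (fun s => fderiv ℝ f (γ s))
        (fderiv ℝ (fderiv ℝ f) (γ t) (b - a)) t :=
      hd2.comp_hasDerivAt t (hγ t)
    have h := hcomp.clm_apply (hasDerivAt_const t (b - a))
    simpa only [map_zero, add_zero] using h
  -- derivative of f ∘ γ
  have hg : ∀ t ∈ Set.Icc (0:ℝ) 1, HasDerivAt (fun s => f (γ s)) (φ t) t := by
    intro t ht
    have hdf : HasFDerivAt f (fderiv ℝ f (γ t)) (γ t) :=
      (((hfCat t ht).differentiableAt (by simp))).hasFDerivAt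
    exact hdf.comp_hasDerivAt t (hγ t)
  -- φ is strictly monotone on [0,1]
  have hφcont : ContinuousOn φ (Set.Icc (0:ℝ) 1) := fun t ht =>
    ((hφ t ht).continuousAt).continuousWithinAt
  have hφmono : StrictMonoOn φ (Set.Icc (0:ℝ) 1) := by
    apply strictMonoOn_of_deriv_pos (convex_Icc 0 1) hφcont
    intro t ht
    rw [interior_Icc] at ht
    have ht' : t ∈ Set.Icc (0:ℝ) 1 := ⟨le_of_lt ht.1, le_of_lt ht.2⟩
    rw [(hφ t ht').deriv]
    exact hH.2.2.2.2 (γ t) (hseg t ht') (b - a) hv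
  -- mean value theorem
  obtain ⟨c, hc, hceq⟩ := exists_hasDerivAt_eq_slope (fun s => f (γ s)) φ
    (by norm_num : (0:ℝ) < 1)
    (fun t ht => ((hg t ht).continuousAt).continuousWithinAt)
    (fun t ht => hg t ⟨le_of_lt ht.1, le_of_lt ht.2⟩)
  have h01 : φ 0 < φ c := hφmono (Set.left_mem_Icc.mpr zero_le_one)
    ⟨le_of_lt hc.1, le_of_lt hc.2⟩ hc.1
  have hγ0 : γ 0 = a := by simp [hγdef]
  have hγ1 : γ 1 = b := by simp [hγdef]
  have hφ0 : φ 0 = fderiv ℝ f a (b - a) := by rw [hφdef]; simp [hγ0]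
  rw [hγ0, hγ1] at hceq
  have : φ c = f b - f a := by rw [hceq]; ring
  rw [hφ0, this] at h01
  simpa [hf] using h01

theorem FM.support_lt (hH : IsFinslerMinkowskiNorm H) {x y : EuclideanSpace ℝ (Fin N)}
    (hx : x ≠ 0) (hy : y ≠ 0) (hne : y ≠ (H y / H x) • x) : fderiv ℝ H x y < H y := by
  have hc : 0 < H x := FM.pos hH hx
  have hd : 0 < H y := FM.pos hH hy
  set c := H x with hcdef
  set d := H y with hddef
  set y' : EuclideanSpace ℝ (Fin N) := (c / d) • y with hy'def
  have hcd : 0 < c / d := div_pos hc hd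
  have hHy' : H y' = c := by
    rw [hy'def, hH.2.2.1, abs_of_pos hcd, ← hddef]
    field_simp
  have hy'0 : y' ≠ 0 := by
    intro h
    rw [h] at hHy'
    rw [(hH.2.1 0).mpr rfl] at hHy'
    exact hc.ne hHy'
  have hy'x : y' ≠ x := by
    intro h
    apply hne
    have : (d / c) • y' = y := by
      rw [hy'def, smul_smul]
      field_simp
      rw [one_smul]
    rw [← this, h]
  -- main claim: fderiv H x y' < H y' = c
  have key : fderiv ℝ H x y' < c := by
    by_cases hneg : y' = -x
    · rw [hneg, map_neg, FM.euler hH hx]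
      linarith
    · -- segment from x to y' avoids 0
      have hseg : ∀ t : ℝ, t ∈ Set.Icc (0:ℝ) 1 → x + t • (y' - x) ≠ 0 := by
        intro t ht h0
        have ht0 : t ≠ 0 := by
          intro h
          rw [h] at h0; simp at h0; exact hx h0
        have heq : y' = (-((1 - t) / t)) • x := by
          have h1 : t • y' = -((1 - t) • x) := by
            have : (1 - t) • x + t • y' = 0 := by
              rw [← h0]; module
            linear_combination (norm := module) this
          have := congrArg (fun z => t⁻¹ • z) h1
          simpa [smul_smul, ht0, neg_div, div_eq_inv_mul] using this
        have hnn : 0 ≤ (1 - t) / t :=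
          div_nonneg (by linarith [ht.2]) (lt_of_le_of_ne ht.1 (Ne.symm ht0)).le
        have : H y' = ((1 - t) / t) * c := by
          rw [heq, hH.2.2.1, abs_neg, abs_of_nonneg hnn, hcdef]
        rw [hHy'] at this
        have hfrac : (1 - t) / t = 1 := by
          field_simp at this ⊢
          nlinarith [hc]
        apply hneg
        rw [heq, hfrac]
        simp
      have hstrict := FM.strict_seg hH hy'x.symm hseg
      rw [(FM.fderiv_sq hH hx).fderiv] at hstrict
      have heulf : fderiv ℝ H x x = c := FM.euler hH hx
      simp only [ContinuousLinearMap.smul_apply, map_sub, smul_eq_mul, hHy', ← hcdef] at hstrict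
      rw [heulf] at hstrict
      nlinarith [hstrict, hc]
  -- scale back
  have hlin : fderiv ℝ H x y' = (c / d) * fderiv ℝ H x y := by
    rw [hy'def, map_smul, smul_eq_mul]
  rw [hlin] at key
  have hcc : (c / d) * d = c := by field_simp
  exact (mul_lt_mul_iff_right₀ hcd).mp (by rw [hcc]; exact key)

theorem FM.support_le (hH : IsFinslerMinkowskiNorm H) {x y : EuclideanSpace ℝ (Fin N)}
    (hx : x ≠ 0) (hy : y ≠ 0) : fderiv ℝ H x y ≤ H y := by
  by_cases hne : y = (H y / H x) • x
  · have hc : 0 < H x := FM.pos hH hx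
    have : fderiv ℝ H x y = H y := by
      conv_lhs => rw [hne]
      rw [map_smul, smul_eq_mul, FM.euler hH hx]
      field_simp
    exact this.le
  · exact (FM.support_lt hH hx hy hne).le

theorem finsler_strict_monotonicity {N : ℕ} (hN : 2 ≤ N)
    (H : EuclideanSpace ℝ (Fin N) → ℝ) (hH : IsFinslerMinkowskiNorm H)
    (p : ℝ) (hp : 2 ≤ p)
    (x y : EuclideanSpace ℝ (Fin N)) (hx : x ≠ 0) (hy : y ≠ 0) (hxy : x ≠ y) :
    0 < ⟪(H x ^ (p - 1)) • gradient H x - (H y ^ (p - 1)) • gradient H y, x - y⟫_ℝ := by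
  have hc : 0 < H x := FM.pos hH hx
  have hd : 0 < H y := FM.pos hH hy
  have hq : 0 < p - 1 := by linarith
  have hinner : ∀ z : EuclideanSpace ℝ (Fin N), ∀ v : EuclideanSpace ℝ (Fin N),
      ⟪gradient H z, v⟫_ℝ = fderiv ℝ H z v := fun z v =>
    InnerProductSpace.toDual_symm_apply
  rw [inner_sub_left, real_inner_smul_left, real_inner_smul_left, hinner, hinner,
    map_sub, map_sub, FM.euler hH hx, FM.euler hH hy]
  set A := fderiv ℝ H x y with hA
  set B := fderiv ℝ H y x with hB
  have hAle : A ≤ H y := FM.support_le hH hx hy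
  have hBle : B ≤ H x := FM.support_le hH hy hx
  have hcq : 0 < H x ^ (p - 1) := Real.rpow_pos_of_pos hc _
  have hdq : 0 < H y ^ (p - 1) := Real.rpow_pos_of_pos hd _
  rcases eq_or_ne (H x) (H y) with heq | hne
  · -- equal norms: strict support inequality
    have hAlt : A < H y := by
      apply FM.support_lt hH hx hy
      rw [← heq]
      rw [div_self hc.ne']
      simpa using hxy.symm
    nlinarith [mul_pos hcq (sub_pos.mpr hAlt), mul_nonneg hdq.le (sub_nonneg.mpr hBle), heq]
  · rcases lt_or_gt_of_ne hne with hlt | hgt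
    · have h1 : H x ^ (p - 1) < H y ^ (p - 1) := Real.rpow_lt_rpow hc.le hlt hq
      nlinarith [mul_pos (sub_pos.mpr h1) (sub_pos.mpr hlt),
        mul_nonneg hcq.le (sub_nonneg.mpr hAle), mul_nonneg hdq.le (sub_nonneg.mpr hBle)]
    · have h1 : H y ^ (p - 1) < H x ^ (p - 1) := Real.rpow_lt_rpow hd.le hgt hq
      nlinarith [mul_pos (sub_pos.mpr h1) (sub_pos.mpr hgt),
        mul_nonneg hcq.le (sub_nonneg.mpr hAle), mul_nonneg hdq.le (sub_nonneg.mpr hBle)]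
end
end

section
/- Let H : ℝ^N → ℝ (N ≥ 2) be a Finsler–Minkowski norm and let 1 < p < ∞. Then for every x, y ∈ ℝ^N \ {0}, ⟨H(x)^{p−1}·∇H(x) − H(y)^{p−1}·∇H(y), x − y⟩ ≥ (H(x)^{p−1} − H(y)^{p−1})·(H(x) − H(y)), where ∇H denotes the gradient of H and ⟨·,·⟩ the Euclidean inner product on ℝ^N. -/
open scoped InnerProductSpace

noncomputable section

section Aux

variable {N : ℕ} {H : EuclideanSpace ℝ (Fin N) → ℝ}

local notation "E" => EuclideanSpace ℝ (Fin N)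

lemma finsler_diffAt (h3 : ContDiffOn ℝ (⊤ : ℕ∞) H {(0 : E)}ᶜ) {x : E} (hx : x ≠ 0) :
    DifferentiableAt ℝ H x :=
  (h3.contDiffAt (isOpen_compl_singleton.mem_nhds hx)).differentiableAt (by simp)

/-- Euler's identity for 1-homogeneous functions. -/
lemma finsler_euler (h2 : ∀ (t : ℝ) (x : E), H (t • x) = |t| * H x)
    (h3 : ContDiffOn ℝ (⊤ : ℕ∞) H {(0 : E)}ᶜ) {x : E} (hx : x ≠ 0) :
    fderiv ℝ H x x = H x := by
  have hsmul : HasDerivAt (fun t : ℝ => t • x) x 1 := by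
    simpa using (hasDerivAt_id (1 : ℝ)).smul_const x
  have hH : HasFDerivAt H (fderiv ℝ H x) ((1 : ℝ) • x) := by
    rw [one_smul]; exact (finsler_diffAt h3 hx).hasFDerivAt
  have hd : HasDerivAt (fun t : ℝ => H (t • x)) (fderiv ℝ H x x) 1 :=
    hH.comp_hasDerivAt 1 hsmul
  have heq : (fun t : ℝ => H (t • x)) =ᶠ[nhds 1] fun t => t * H x := by
    filter_upwards [Ioi_mem_nhds (zero_lt_one (α := ℝ))] with t ht
    rw [h2 t x, abs_of_pos ht]
  have hd' : HasDerivAt (fun t : ℝ => t * H x) (fderiv ℝ H x x) 1 :=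
    hd.congr_of_eventuallyEq heq.symm
  have hd'' : HasDerivAt (fun t : ℝ => t * H x) (H x) 1 := by
    simpa using (hasDerivAt_id (1 : ℝ)).mul_const (H x)
  exact hd'.unique hd''

lemma finsler_fderivF (h3 : ContDiffOn ℝ (⊤ : ℕ∞) H {(0 : E)}ᶜ) {x : E} (hx : x ≠ 0) :
    HasFDerivAt (fun z => H z ^ 2 / 2) (H x • fderiv ℝ H x) x := by
  have hf := (finsler_diffAt h3 hx).hasFDerivAt
  have hm := (hf.mul hf).const_mul (2 : ℝ)⁻¹
  have hfun : (fun z => H z ^ 2 / 2) = fun z => (2 : ℝ)⁻¹ * (H z * H z) := by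
    funext z; ring
  rw [hfun]
  refine hm.congr_fderiv ?_
  ext v
  simp only [ContinuousLinearMap.smul_apply, ContinuousLinearMap.add_apply, smul_eq_mul]
  ring

/-- Convexity inequality along a segment avoiding the origin. -/
lemma finsler_convex_seg (h3 : ContDiffOn ℝ (⊤ : ℕ∞) H {(0 : E)}ᶜ)
    (h4 : ∀ x : E, x ≠ 0 → ∀ v : E, v ≠ 0 →
      0 < fderiv ℝ (fderiv ℝ (fun z => H z ^ 2 / 2)) x v v)
    {x v : E} (hv : v ≠ 0) (hseg : ∀ t ∈ Set.Icc (0 : ℝ) 1, x + t • v ≠ 0) :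
    fderiv ℝ (fun z => H z ^ 2 / 2) x v ≤ H (x + v) ^ 2 / 2 - H x ^ 2 / 2 := by
  set F : E → ℝ := fun z => H z ^ 2 / 2 with hFdef
  have hFsm : ContDiffOn ℝ (⊤ : ℕ∞) F {(0 : E)}ᶜ := (h3.pow 2).div_const 2
  set c : ℝ → E := fun t => x + t • v with hcdef
  have hc0 : c 0 = x := by simp [hcdef]
  have hc1 : c 1 = x + v := by simp [hcdef]
  have hc' : ∀ t : ℝ, HasDerivAt c v t := by
    intro t
    simpa only [id, one_smul] using (((hasDerivAt_id t).smul_const v).const_add x)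
  set φ : ℝ → ℝ := fun t => fderiv ℝ F (c t) v with hφdef
  have hFd : ∀ t : ℝ, c t ≠ 0 → HasDerivAt (fun s => F (c s)) (φ t) t := by
    intro t ht
    have hd : HasFDerivAt F (fderiv ℝ F (c t)) (c t) :=
      ((hFsm.contDiffAt (isOpen_compl_singleton.mem_nhds ht)).differentiableAt
        (by simp)).hasFDerivAt
    exact hd.comp_hasDerivAt t (hc' t)
  have hφd : ∀ t : ℝ, c t ≠ 0 →
      HasDerivAt φ (fderiv ℝ (fderiv ℝ F) (c t) v v) t := by
    intro t ht
    have hsm : ContDiffAt ℝ (⊤ : ℕ∞) F (c t) :=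
      hFsm.contDiffAt (isOpen_compl_singleton.mem_nhds ht)
    have hsm' : ContDiffAt ℝ (⊤ : ℕ∞) (fderiv ℝ F) (c t) :=
      hsm.fderiv_right (by exact_mod_cast le_top)
    have hd2 : HasFDerivAt (fderiv ℝ F) (fderiv ℝ (fderiv ℝ F) (c t)) (c t) :=
      (hsm'.differentiableAt (by simp)).hasFDerivAt
    have hcomp : HasDerivAt (fun s => fderiv ℝ F (c s))
        (fderiv ℝ (fderiv ℝ F) (c t) v) t := hd2.comp_hasDerivAt t (hc' t)
    have := hcomp.clm_apply (hasDerivAt_const t v)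
    simpa using this
  -- φ is strictly monotone on [0,1]
  have hmono : StrictMonoOn φ (Set.Icc (0 : ℝ) 1) := by
    apply strictMonoOn_of_deriv_pos (convex_Icc 0 1)
    · intro t ht
      exact (hφd t (hseg t ht)).continuousAt.continuousWithinAt
    · intro t ht
      rw [interior_Icc] at ht
      have htc : c t ≠ 0 := hseg t (Set.mem_Icc_of_Ioo ht)
      rw [(hφd t htc).deriv]
      exact h4 (c t) htc v hv
  -- MVT
  obtain ⟨t₀, ht₀, hslope⟩ := exists_hasDerivAt_eq_slope (fun s => F (c s)) φ
    (zero_lt_one (α := ℝ))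
    (fun t ht => (hFd t (hseg t ht)).continuousAt.continuousWithinAt)
    (fun t ht => hFd t (hseg t (Set.mem_Icc_of_Ioo ht)))
  have h01 : φ 0 < φ t₀ :=
    hmono (Set.left_mem_Icc.2 zero_le_one) (Set.mem_Icc_of_Ioo ht₀) ht₀.1
  have hφ0 : φ 0 = fderiv ℝ F x v := by rw [hφdef]; simp [hc0]
  rw [hφ0] at h01
  rw [hslope] at h01
  rw [hc0, hc1] at h01
  have : fderiv ℝ F x v < F (x + v) - F x := by
    simpa using h01
  exact le_of_lt this

/-- The key gradient inequality `⟨∇H(x), y⟩ ≤ H(y)`. -/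
lemma finsler_grad_le (h0 : ∀ x : E, 0 ≤ H x) (h1 : ∀ x : E, H x = 0 ↔ x = 0)
    (h2 : ∀ (t : ℝ) (x : E), H (t • x) = |t| * H x)
    (h3 : ContDiffOn ℝ (⊤ : ℕ∞) H {(0 : E)}ᶜ)
    (h4 : ∀ x : E, x ≠ 0 → ∀ v : E, v ≠ 0 →
      0 < fderiv ℝ (fderiv ℝ (fun z => H z ^ 2 / 2)) x v v)
    {x y : E} (hx : x ≠ 0) (hy : y ≠ 0) :
    fderiv ℝ H x y ≤ H y := by
  have hHx : 0 < H x := lt_of_le_of_ne (h0 x) (fun h => hx ((h1 x).1 h.symm))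
  have hHy : 0 < H y := lt_of_le_of_ne (h0 y) (fun h => hy ((h1 y).1 h.symm))
  have heuler : fderiv ℝ H x x = H x := finsler_euler h2 h3 hx
  set lam : ℝ := H x / H y with hlam
  have hlam_pos : 0 < lam := div_pos hHx hHy
  set w : E := lam • y with hw
  set v : E := w - x with hv
  by_cases hv0 : v = 0
  · -- x = lam • y
    have hxy : x = lam • y := by
      have : w = x := by rwa [hv, sub_eq_zero] at hv0
      rw [← this]
    have : fderiv ℝ H x y = lam⁻¹ * H x := by
      have hy' : y = lam⁻¹ • x := by
        rw [hxy, smul_smul, inv_mul_cancel₀ (ne_of_gt hlam_pos), one_smul]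
      rw [hy', (fderiv ℝ H x).map_smul, smul_eq_mul, heuler]
    have h' : lam⁻¹ * H x = H y := by
      rw [hlam]; field_simp
    rw [this, h']
  · by_cases hseg : ∀ t ∈ Set.Icc (0 : ℝ) 1, x + t • v ≠ 0
    · have hkey := finsler_convex_seg h3 h4 hv0 hseg
      have hxv : x + v = w := by rw [hv]; abel
      have hDF : fderiv ℝ (fun z => H z ^ 2 / 2) x = H x • fderiv ℝ H x :=
        (finsler_fderivF h3 hx).fderiv
      have hHw : H w = H x := by
        rw [hw, h2, abs_of_pos hlam_pos, hlam, div_mul_cancel₀ _ (ne_of_gt hHy)]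
      rw [hxv, hHw, hDF] at hkey
      have hval : (H x • fderiv ℝ H x) v = H x * (lam * fderiv ℝ H x y - H x) := by
        rw [hv, hw]
        simp only [ContinuousLinearMap.smul_apply, map_sub, (fderiv ℝ H x).map_smul,
          smul_eq_mul, heuler]
        ring
      rw [hval] at hkey
      have : lam * fderiv ℝ H x y ≤ H x := by nlinarith
      have hdle : fderiv ℝ H x y ≤ H x / lam :=
        (le_div_iff₀ hlam_pos).2 (by linarith [mul_comm lam (fderiv ℝ H x y)])
      have hfin : H x / lam = H y := by rw [hlam]; field_simp
      linarith
    · push_neg at hseg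
      obtain ⟨t, ht, hzero⟩ := hseg
      -- x + t • (w - x) = 0, so (1 - t) • x + (t * lam) • y = 0
      have ht1 : t ≠ 1 := by
        intro h
        apply hy
        have : w = 0 := by
          have := hzero; rw [h, one_smul, hv] at this
          simpa using this
        have := this
        rw [hw] at this
        exact (smul_eq_zero.1 this).resolve_left (ne_of_gt hlam_pos)
      have ht0 : t ≠ 0 := by
        intro h
        apply hx
        simpa [h] using hzero
      have htpos : 0 < t := lt_of_le_of_ne ht.1 (Ne.symm ht0)
      have htlt : t < 1 := lt_of_le_of_ne ht.2 ht1
      have hyx : y = (-((1 - t) / (t * lam))) • x := by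
        have h1' : (1 - t) • x + (t * lam) • y = 0 := by
          have := hzero
          rw [hv, hw] at this
          linear_combination (norm := module) this
        have h2' : (t * lam) • y = -((1 - t) • x) := by
          rw [eq_neg_iff_add_eq_zero, add_comm]; exact h1'
        have hne : t * lam ≠ 0 := by positivity
        apply smul_right_injective (EuclideanSpace ℝ (Fin N)) hne
        show (t * lam) • y = (t * lam) • ((-((1 - t) / (t * lam))) • x)
        rw [smul_smul]
        have hco : t * lam * (-((1 - t) / (t * lam))) = -(1 - t) := by field_simp
        rw [hco, neg_smul]
        exact h2'
      have : fderiv ℝ H x y = (-((1 - t) / (t * lam))) * H x := by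
        rw [hyx, (fderiv ℝ H x).map_smul, smul_eq_mul, heuler]
      rw [this]
      have hc : (0:ℝ) < (1 - t) / (t * lam) := by
        apply div_pos (by linarith) (by positivity)
      nlinarith

end Aux

theorem finsler_monotonicity_lower_bound {N : ℕ} (hN : 2 ≤ N)
    (H : EuclideanSpace ℝ (Fin N) → ℝ) (hH : IsFinslerMinkowskiNorm H)
    (p : ℝ) (hp : 1 < p) :
    ∀ x : EuclideanSpace ℝ (Fin N), x ≠ 0 → ∀ y : EuclideanSpace ℝ (Fin N), y ≠ 0 →
      (H x ^ (p - 1) - H y ^ (p - 1)) * (H x - H y)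
        ≤ ⟪(H x ^ (p - 1)) • gradient H x - (H y ^ (p - 1)) • gradient H y, x - y⟫_ℝ := by
  obtain ⟨h0, h1, h2, h3, h4⟩ := hH
  intro x hx y hy
  have hHx : 0 < H x := lt_of_le_of_ne (h0 x) (fun h => hx ((h1 x).1 h.symm))
  have hHy : 0 < H y := lt_of_le_of_ne (h0 y) (fun h => hy ((h1 y).1 h.symm))
  have ha : 0 < H x ^ (p - 1) := Real.rpow_pos_of_pos hHx _
  have hb : 0 < H y ^ (p - 1) := Real.rpow_pos_of_pos hHy _
  have hgrad : ∀ (z : EuclideanSpace ℝ (Fin N)) (u : EuclideanSpace ℝ (Fin N)),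
      ⟪gradient H z, u⟫_ℝ = fderiv ℝ H z u := by
    intro z u
    rw [gradient]
    exact InnerProductSpace.toDual_symm_apply
  have hex : fderiv ℝ H x x = H x := finsler_euler h2 h3 hx
  have hey : fderiv ℝ H y y = H y := finsler_euler h2 h3 hy
  have hxy : fderiv ℝ H x y ≤ H y := finsler_grad_le h0 h1 h2 h3 h4 hx hy
  have hyx : fderiv ℝ H y x ≤ H x := finsler_grad_le h0 h1 h2 h3 h4 hy hx
  rw [inner_sub_left, real_inner_smul_left, real_inner_smul_left,
    inner_sub_right, inner_sub_right, hgrad, hgrad, hgrad, hgrad,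
    hex, hey]
  nlinarith [mul_le_mul_of_nonneg_left hxy (le_of_lt ha),
    mul_le_mul_of_nonneg_left hyx (le_of_lt hb)]
end
end
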